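/- arXiv:2111.04899 — 15 statements merged into one kernel-verified Lean document; each statement's English description precedes it below -/
import Mathlib

section
/- Let a and d be positive integers, let A be a nonempty set of positive integers, and let M be the submonoid of ℕ generated by A. Then the following are equivalent: (1) a·s + (a−1)·d ∈ M for every s ∈ A; (2) a·m + (a−1)·d ∈ M for every m ∈ M \ {0}. -/
/-- For positive integers `a`, `d`, a nonempty set `A` of positive
integers and `M = ⟨A⟩` the submonoid of ℕ generated by `A`, the following are
equivalent: (1) `a*s + (a-1)*d ∈ M` for every `s ∈ A`;
(2) `a*m + (a-1)*d ∈ M` for every nonzero `m ∈ M`. -/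
theorem stmt_0 (a d : ℕ) (ha : 0 < a) (hd : 0 < d)
    (A : Set ℕ) (hA : A.Nonempty) (hApos : ∀ x ∈ A, 0 < x) :
    (∀ s ∈ A, a * s + (a - 1) * d ∈ AddSubmonoid.closure A) ↔
      (∀ m ∈ AddSubmonoid.closure A, m ≠ 0 →
        a * m + (a - 1) * d ∈ AddSubmonoid.closure A) := by
  constructor
  · intro h m hm hm0
    have key : ∀ x ∈ AddSubmonoid.closure A,
        x = 0 ∨ a * x + (a - 1) * d ∈ AddSubmonoid.closure A := by
      intro x hx
      induction hx using AddSubmonoid.closure_induction with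
      | mem x hx => exact Or.inr (h x hx)
      | zero => exact Or.inl rfl
      | add x y hx hy ihx ihy =>
        rcases ihx with rfl | ihx
        · simpa using ihy
        · rcases ihy with rfl | ihy
          · simpa using Or.inr ihx
          · right
            have hy' : a * y ∈ AddSubmonoid.closure A := by
              simpa using AddSubmonoid.nsmul_mem (AddSubmonoid.closure A) hy a
            have := AddSubmonoid.add_mem _ ihx hy'
            convert this using 1
            ring
    exact (key m hm).resolve_left hm0
  · intro h s hs
    exact h s (AddSubmonoid.subset_closure hs) (hApos s hs).ne'
end

section
/- Let r be a positive integer such that s_r belongs to the submonoid of ℕ generated by {s_j : 0 ≤ j < r}. Then S_n equals the submonoid of ℕ generated by {s_j : 0 ≤ j < r}. -/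
/-- If `s r` belongs to the submonoid generated by `{s j : j < r}`
(with `r > 0`), then `S_n` (the submonoid generated by all the `s j`) equals the
submonoid generated by `{s j : j < r}`. -/
theorem stmt_1 (a c d n : ℕ) (ha : 2 ≤ a) (hc : 0 < c) (hd : 0 < d)
    (hdca : d < c * a) (hda : Nat.Coprime d a) (hdc : Nat.Coprime d c) (hn : 0 < n)
    (s : ℕ → ℕ) (hs : ∀ j, s j = c * a ^ (n + j) - d)
    (r : ℕ) (hr : 0 < r)
    (hmem : s r ∈ AddSubmonoid.closure {x | ∃ j < r, x = s j}) :
    AddSubmonoid.closure (Set.range s) =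
      AddSubmonoid.closure {x | ∃ j < r, x = s j} := by
  set G : Set ℕ := {x | ∃ j < r, x = s j} with hG
  have hdle : ∀ j : ℕ, d ≤ c * a ^ (n + j) := by
    intro j
    have h1 : c * a ≤ c * a ^ (n + j) := by
      have : a ^ 1 ≤ a ^ (n + j) :=
        Nat.pow_le_pow_right (by omega) (by omega)
      simpa using Nat.mul_le_mul_left c this
    omega
  have hpos : ∀ j : ℕ, 0 < s j := by
    intro j
    rw [hs]
    have h1 : c * a ≤ c * a ^ (n + j) := by
      have : a ^ 1 ≤ a ^ (n + j) :=
        Nat.pow_le_pow_right (by omega) (by omega)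
      simpa using Nat.mul_le_mul_left c this
    omega
  -- key identity
  have key : ∀ m i : ℕ, s (m + 1) + a * s i = a * s m + s (i + 1) := by
    intro m i
    have hX := hdle m
    have hY := hdle i
    rw [hs, hs, hs, hs]
    have e1 : c * a ^ (n + (m + 1)) = a * (c * a ^ (n + m)) := by ring
    have e2 : c * a ^ (n + (i + 1)) = a * (c * a ^ (n + i)) := by ring
    rw [e1, e2, Nat.mul_sub, Nat.mul_sub]
    have h3 : a * d ≤ a * (c * a ^ (n + m)) := Nat.mul_le_mul_left a hX
    have h4 : a * d ≤ a * (c * a ^ (n + i)) := Nat.mul_le_mul_left a hY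
    have h5 : d ≤ a * (c * a ^ (n + m)) := le_trans hX (Nat.le_mul_of_pos_left _ (by omega))
    have h6 : d ≤ a * (c * a ^ (n + i)) := le_trans hY (Nat.le_mul_of_pos_left _ (by omega))
    omega
  -- decomposition lemma
  have decomp : ∀ x ∈ AddSubmonoid.closure G,
      x = 0 ∨ ∃ j < r, ∃ y ∈ AddSubmonoid.closure G, x = s j + y := by
    intro x hx
    induction hx using AddSubmonoid.closure_induction with
    | mem z hz =>
      obtain ⟨j, hj, rfl⟩ := hz
      exact Or.inr ⟨j, hj, 0, (AddSubmonoid.closure G).zero_mem, (add_zero _).symm⟩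
    | zero => exact Or.inl rfl
    | add x y hxc hyc ihx ihy =>
      rcases ihx with rfl | ⟨j, hj, u, hu, rfl⟩
      · simpa using ihy
      · refine Or.inr ⟨j, hj, u + y, (AddSubmonoid.closure G).add_mem hu hyc, by ring⟩
  -- all s m lie in closure G
  have hall : ∀ k : ℕ, s (r + k) ∈ AddSubmonoid.closure G := by
    intro k
    induction k with
    | zero => simpa using hmem
    | succ k ih =>
      rcases decomp _ ih with h0 | ⟨j, hj, y, hy, hxy⟩
      · exact absurd h0 (hpos _).ne'
      · have hid := key (r + k) j
        have heq : s (r + k + 1) = s (j + 1) + a * y := by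
          rw [hxy] at hid
          have : s (r + k + 1) + a * s j = a * s j + (s (j + 1) + a * y) := by
            rw [hid]; ring
          omega
        have hj1 : s (j + 1) ∈ AddSubmonoid.closure G := by
          rcases lt_or_eq_of_le (Nat.succ_le_of_lt hj) with h | h
          · exact AddSubmonoid.subset_closure ⟨j + 1, h, rfl⟩
          · rw [show j + 1 = r from h]; exact hmem
        have hay : a * y ∈ AddSubmonoid.closure G := by
          simpa using AddSubmonoid.nsmul_mem _ hy a
        have : s (j + 1) + a * y ∈ AddSubmonoid.closure G :=
          (AddSubmonoid.closure G).add_mem hj1 hay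
        show s (r + (k + 1)) ∈ AddSubmonoid.closure G
        rw [show r + (k + 1) = r + k + 1 by ring, heq]
        exact this
  have hall' : ∀ m : ℕ, s m ∈ AddSubmonoid.closure G := by
    intro m
    rcases lt_or_ge m r with h | h
    · exact AddSubmonoid.subset_closure ⟨m, h, rfl⟩
    · have : m = r + (m - r) := by omega
      rw [this]; exact hall _
  apply le_antisymm
  · rw [AddSubmonoid.closure_le]
    rintro x ⟨m, rfl⟩
    exact hall' m
  · apply AddSubmonoid.closure_mono
    rintro x ⟨j, _, rfl⟩
    exact ⟨j, rfl⟩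
end

section
/- Suppose that for some positive integer m, s_m belongs to the submonoid of ℕ generated by {s_j : 0 ≤ j < m} but s_{m−1} does not belong to the submonoid of ℕ generated by {s_j : 0 ≤ j < m−1}. Then {s_j : 0 ≤ j < m} is the minimal generating set of S_n; in particular, e(S_n) = m. -/
/-- The minimal generating set of a submonoid `M` of ℕ: the nonzero elements of
`M` that cannot be written as a sum of two nonzero elements of `M`. -/
def minGens (M : AddSubmonoid ℕ) : Set ℕ :=
  {x | x ∈ M ∧ x ≠ 0 ∧ ¬∃ y ∈ M, ∃ z ∈ M, y ≠ 0 ∧ z ≠ 0 ∧ x = y + z}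

/-- The embedding dimension `e(M)`: the number of minimal generators of `M`. -/
noncomputable def edim (M : AddSubmonoid ℕ) : ℕ := (minGens M).ncard

/-- Decomposition: every nonzero element of the closure starts with a generator. -/
private lemma decomp_aux (s : ℕ → ℕ) (m : ℕ) {x : ℕ}
    (hx : x ∈ AddSubmonoid.closure {x | ∃ j < m, x = s j}) :
    x = 0 ∨ ∃ j < m, ∃ r ∈ AddSubmonoid.closure {x | ∃ j < m, x = s j}, x = s j + r := by
  induction hx using AddSubmonoid.closure_induction with
  | mem y hy =>
      obtain ⟨j, hj, rfl⟩ := hy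
      exact Or.inr ⟨j, hj, 0, AddSubmonoid.zero_mem _, (add_zero _).symm⟩
  | zero => exact Or.inl rfl
  | add x y hx hy ihx ihy =>
      rcases ihx with rfl | ⟨j, hj, r, hr, rfl⟩
      · simpa using ihy
      · exact Or.inr ⟨j, hj, r + y, AddSubmonoid.add_mem _ hr hy, by ring⟩

/-- Smallness: a member of the closure smaller than `s k` lies in the `k`-th closure. -/
private lemma small_aux (s : ℕ → ℕ) (hsmono : StrictMono s) (m k : ℕ) {x : ℕ}
    (hx : x ∈ AddSubmonoid.closure {x | ∃ j < m, x = s j}) (hxk : x < s k) :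
    x ∈ AddSubmonoid.closure {x | ∃ j < k, x = s j} := by
  induction hx using AddSubmonoid.closure_induction with
  | mem y hy =>
      obtain ⟨j, hj, rfl⟩ := hy
      exact AddSubmonoid.subset_closure ⟨j, hsmono.lt_iff_lt.mp hxk, rfl⟩
  | zero => exact AddSubmonoid.zero_mem _
  | add x y hx hy ihx ihy =>
      exact AddSubmonoid.add_mem _ (ihx (by omega)) (ihy (by omega))

/-- Propagation: if `s m` is in the closure of the first `m` values, so is every later one. -/
private lemma propagate_aux (a d : ℕ) (s : ℕ → ℕ)
    (hstep : ∀ j, s (j + 1) = a * s j + (a - 1) * d)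
    (hpos : ∀ j, 0 < s j) (m : ℕ)
    (hm0 : s m ∈ AddSubmonoid.closure {x | ∃ j < m, x = s j}) :
    ∀ k, s (m + k) ∈ AddSubmonoid.closure {x | ∃ j < m, x = s j} := by
  intro k
  induction k with
  | zero => simpa using hm0
  | succ k ih =>
      rcases decomp_aux s m ih with h0 | ⟨j, hj, r, hr, hrep⟩
      · exact absurd h0 (hpos _).ne'
      · have hnext : s (m + (k + 1)) = s (j + 1) + a * r := by
          have h1 := hstep (m + k)
          have h2 := hstep j
          rw [show m + (k + 1) = (m + k) + 1 by ring] at *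
          rw [h1, hrep, h2]; ring
        rw [hnext]
        have hj1 : s (j + 1) ∈ AddSubmonoid.closure {x | ∃ j < m, x = s j} := by
          rcases lt_or_eq_of_le (Nat.succ_le_of_lt hj) with h | h
          · exact AddSubmonoid.subset_closure ⟨j + 1, h, rfl⟩
          · rw [show j + 1 = m from h]; exact hm0
        have har : a * r ∈ AddSubmonoid.closure {x | ∃ j < m, x = s j} := by
          simpa [nsmul_eq_mul] using AddSubmonoid.nsmul_mem _ hr a
        exact AddSubmonoid.add_mem _ hj1 har

/-- if `s m` belongs to the submonoid generated by `{s j : j < m}`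
but `s (m-1)` does not belong to the submonoid generated by `{s j : j < m-1}`,
then `{s j : j < m}` is the minimal generating set of `S_n`; in particular
`e(S_n) = m`. -/
theorem stmt_2 (a c d n : ℕ) (ha : 2 ≤ a) (hc : 0 < c) (hd : 0 < d)
    (hdca : d < c * a) (hda : Nat.Coprime d a) (hdc : Nat.Coprime d c) (hn : 0 < n)
    (s : ℕ → ℕ) (hs : ∀ j, s j = c * a ^ (n + j) - d)
    (m : ℕ) (hm : 0 < m)
    (hmem : s m ∈ AddSubmonoid.closure {x | ∃ j < m, x = s j})
    (hnmem : s (m - 1) ∉ AddSubmonoid.closure {x | ∃ j < m - 1, x = s j}) :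
    minGens (AddSubmonoid.closure (Set.range s)) = {x | ∃ j < m, x = s j} ∧
      edim (AddSubmonoid.closure (Set.range s)) = m := by
  -- basic arithmetic facts
  have hcad : ∀ j, d < c * a ^ (n + j) := by
    intro j
    have h1 : a ≤ a ^ (n + j) := by
      calc a = a ^ 1 := (pow_one a).symm
      _ ≤ a ^ (n + j) := Nat.pow_le_pow_right (by omega) (by omega)
    calc d < c * a := hdca
    _ ≤ c * a ^ (n + j) := Nat.mul_le_mul_left c h1
  have hpos : ∀ j, 0 < s j := by
    intro j; rw [hs j]; have := hcad j; omega
  have hstep : ∀ j, s (j + 1) = a * s j + (a - 1) * d := by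
    intro j
    have hX := hcad j
    rw [hs j, hs (j + 1)]
    have hpow : c * a ^ (n + (j + 1)) = a * (c * a ^ (n + j)) := by ring
    rw [hpow]
    have h1 : a * (c * a ^ (n + j) - d) = a * (c * a ^ (n + j)) - a * d := Nat.mul_sub ..
    have h2 : (a - 1) * d = a * d - d := by
      rw [Nat.sub_mul]; ring_nf
    rw [h1, h2]
    have h3 : a * d ≤ a * (c * a ^ (n + j)) := Nat.mul_le_mul_left a (le_of_lt hX)
    have h4 : d ≤ a * d := Nat.le_mul_of_pos_left d (by omega)
    omega
  have hsmono : StrictMono s := by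
    apply strictMono_nat_of_lt_succ
    intro j
    have h1 := hstep j
    have h2 := hpos j
    have h3 : 2 * s j ≤ a * s j := Nat.mul_le_mul_right (s j) ha
    omega
  -- notation
  set G : Set ℕ := {x | ∃ j < m, x = s j} with hG
  set M : AddSubmonoid ℕ := AddSubmonoid.closure G with hM
  -- closure of range s equals M
  have hSM : AddSubmonoid.closure (Set.range s) = M := by
    apply le_antisymm
    · rw [AddSubmonoid.closure_le]
      rintro x ⟨k, rfl⟩
      rcases lt_or_ge k m with h | h
      · exact AddSubmonoid.subset_closure ⟨k, h, rfl⟩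
      · have := propagate_aux a d s hstep hpos m hmem (k - m)
        rwa [show m + (k - m) = k by omega] at this
    · exact AddSubmonoid.closure_mono (by rintro x ⟨j, hj, rfl⟩; exact ⟨j, rfl⟩)
  -- no s j is in the closure of earlier ones, for j < m
  have hL3 : ∀ j < m, s j ∉ AddSubmonoid.closure {x | ∃ i < j, x = s i} := by
    intro j hj hcon
    apply hnmem
    have hprop := propagate_aux a d s hstep hpos j hcon (m - 1 - j)
    rw [show j + (m - 1 - j) = m - 1 by omega] at hprop
    exact AddSubmonoid.closure_mono
      (by rintro x ⟨i, hi, rfl⟩; exact ⟨i, by omega, rfl⟩) hprop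
  -- minGens M = G
  have hmain : minGens M = G := by
    ext x
    constructor
    · rintro ⟨hxM, hx0, hxind⟩
      rcases decomp_aux s m hxM with rfl | ⟨j, hj, r, hr, rfl⟩
      · exact absurd rfl hx0
      · rcases Nat.eq_zero_or_pos r with rfl | hr0
        · exact ⟨j, hj, by simp⟩
        · exact absurd ⟨s j, AddSubmonoid.subset_closure ⟨j, hj, rfl⟩, r, hr,
            (hpos j).ne', hr0.ne', rfl⟩ hxind
    · rintro ⟨j, hj, rfl⟩
      refine ⟨AddSubmonoid.subset_closure ⟨j, hj, rfl⟩, (hpos j).ne', ?_⟩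
      rintro ⟨y, hy, z, hz, hy0, hz0, hyz⟩
      have hylt : y < s j := by have := hpos 0; omega
      have hzlt : z < s j := by omega
      have hyj := small_aux s hsmono m j hy hylt
      have hzj := small_aux s hsmono m j hz hzlt
      exact hL3 j hj (hyz ▸ AddSubmonoid.add_mem _ hyj hzj)
  constructor
  · rw [hSM]; exact hmain
  · rw [edim, hSM, hmain]
    have : G = ↑((Finset.range m).image s) := by
      ext x
      simp only [hG, Finset.coe_image, Finset.coe_range, Set.mem_image, Set.mem_Iio,
        Set.mem_setOf_eq]
      constructor
      · rintro ⟨j, hj, rfl⟩; exact ⟨j, hj, rfl⟩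
      · rintro ⟨j, hj, rfl⟩; exact ⟨j, hj, rfl⟩
    rw [this, Set.ncard_coe_finset,
      Finset.card_image_of_injective _ hsmono.injective, Finset.card_range]
end

section
/- If e(S_n) = 1, then n = 1 and c·a − d divides c − d. Conversely, if c·a − d divides c − d, then e(S_1) = 1. -/
lemma minGens_closure_singleton (g : ℕ) (hg : g ≠ 0) :
    minGens (AddSubmonoid.closure {g}) = {g} := by
  have hgpos : 0 < g := Nat.pos_of_ne_zero hg
  ext x
  simp only [Set.mem_singleton_iff]
  constructor
  · rintro ⟨hx, hx0, hns⟩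
    rw [AddSubmonoid.mem_closure_singleton] at hx
    obtain ⟨k, hk⟩ := hx
    rw [smul_eq_mul] at hk
    rcases Nat.lt_or_ge k 2 with hk2 | hk2
    · interval_cases k <;> omega
    · exfalso
      obtain ⟨m, rfl⟩ : ∃ m, k = m + 2 := ⟨k - 2, by omega⟩
      apply hns
      refine ⟨g, AddSubmonoid.subset_closure rfl, (m + 1) * g, ?_, hg, ?_, ?_⟩
      · rw [AddSubmonoid.mem_closure_singleton]; exact ⟨m + 1, by rw [smul_eq_mul]⟩
      · positivity
      · rw [← hk]; ring
  · rintro rfl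
    refine ⟨AddSubmonoid.subset_closure rfl, hg, ?_⟩
    rintro ⟨y, hy, z, hz, hy0, hz0, hsum⟩
    rw [AddSubmonoid.mem_closure_singleton] at hy hz
    obtain ⟨m, rfl⟩ := hy
    obtain ⟨k, rfl⟩ := hz
    simp only [smul_eq_mul] at hy0 hz0 hsum
    have hm : 1 ≤ m := Nat.pos_of_ne_zero (by rintro rfl; simp at hy0)
    have hk : 1 ≤ k := Nat.pos_of_ne_zero (by rintro rfl; simp at hz0)
    have h1 : x ≤ m * x := Nat.le_mul_of_pos_left x hm
    have h2 : x ≤ k * x := Nat.le_mul_of_pos_left x hk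
    omega

/-- If `e(S_n) = 1`, then `n = 1` and `c*a - d` divides `c - d`.
Conversely, if `c*a - d` divides `c - d`, then `e(S_1) = 1`. -/
theorem stmt_3 (a c d : ℕ) (ha : 2 ≤ a) (hc : 0 < c) (hd : 0 < d)
    (hdca : d < c * a) (hda : Nat.Coprime d a) (hdc : Nat.Coprime d c)
    (S : ℕ → AddSubmonoid ℕ)
    (hS : ∀ n, S n = AddSubmonoid.closure {x | ∃ j : ℕ, x = c * a ^ (n + j) - d}) :
    (∀ n : ℕ, 0 < n → edim (S n) = 1 →
      n = 1 ∧ ((c : ℤ) * a - d) ∣ ((c : ℤ) - d)) ∧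
    (((c : ℤ) * a - d) ∣ ((c : ℤ) - d) → edim (S 1) = 1) := by
  have hdd0 : 0 < d * (a - 1) := by
    apply Nat.mul_pos hd; omega
  -- key: in ℤ, (c*a - d) ∣ d*(a-1) ↔ (c*a - d) ∣ (c - d)
  have hcop : IsCoprime ((c:ℤ) * a - d) (a:ℤ) := by
    have h0 : IsCoprime ((d:ℤ)) (a:ℤ) := Nat.isCoprime_iff_coprime.mpr hda
    have h1 := h0.neg_left.add_mul_left_left (c : ℤ)
    rwa [show (-(d:ℤ) + (a:ℤ) * c) = (c:ℤ) * a - d from by ring] at h1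
  constructor
  · intro n hn h1
    have h1' : (minGens (S n)).ncard = 1 := h1
    have hapow : a ≤ a ^ n := Nat.le_self_pow (by omega) a
    have hdn : d < c * a ^ n := lt_of_lt_of_le hdca (Nat.mul_le_mul_left c hapow)
    -- every nonzero element of S n is ≥ c * a ^ n - d
    have hmin : ∀ x ∈ S n, x = 0 ∨ c * a ^ n - d ≤ x := by
      intro x hx
      rw [hS n] at hx
      induction hx using AddSubmonoid.closure_induction with
      | mem x hxm =>
        obtain ⟨j, rfl⟩ := hxm
        right
        have : a ^ n ≤ a ^ (n + j) := Nat.pow_le_pow_right (by omega) (by omega)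
        have : c * a ^ n ≤ c * a ^ (n + j) := Nat.mul_le_mul_left c this
        omega
      | zero => left; rfl
      | add x y _ _ ihx ihy => rcases ihx with rfl | h <;> rcases ihy with rfl | h' <;> omega
    -- c * a ^ n - d is a minimal generator
    have hs0mem : c * a ^ n - d ∈ S n := by
      rw [hS n]; exact AddSubmonoid.subset_closure ⟨0, rfl⟩
    have hs0min : c * a ^ n - d ∈ minGens (S n) := by
      refine ⟨hs0mem, by omega, ?_⟩
      rintro ⟨y, hy, z, hz, hy0, hz0, he⟩
      rcases hmin y hy with rfl | h <;> rcases hmin z hz with rfl | h' <;> omega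
    obtain ⟨w, hw⟩ := Set.ncard_eq_one.mp h1'
    have hmge : minGens (S n) = {c * a ^ n - d} := by
      rw [hw]; rw [hw] at hs0min
      simp_all
    -- every element of S n is divisible by c * a ^ n - d
    have hdvd : ∀ x, x ∈ S n → (c * a ^ n - d) ∣ x := by
      intro x
      induction x using Nat.strong_induction_on with
      | _ x ih =>
        intro hx
        rcases eq_or_ne x 0 with rfl | hx0
        · exact dvd_zero _
        by_cases hmg : x ∈ minGens (S n)
        · rw [hmge, Set.mem_singleton_iff] at hmg
          rw [hmg]
        · have hex : ∃ y ∈ S n, ∃ z ∈ S n, y ≠ 0 ∧ z ≠ 0 ∧ x = y + z := by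
            by_contra hcon
            exact hmg ⟨hx, hx0, hcon⟩
          obtain ⟨y, hy, z, hz, hy0, hz0, rfl⟩ := hex
          exact dvd_add (ih y (by omega) hy) (ih z (by omega) hz)
    -- hence (c*a^n - d) ∣ d*(a-1)
    have hs1mem : c * a ^ (n + 1) - d ∈ S n := by
      rw [hS n]; exact AddSubmonoid.subset_closure ⟨1, rfl⟩
    have hdn1 : d < c * a ^ (n + 1) := by
      have : a ^ n ≤ a ^ (n + 1) := Nat.pow_le_pow_right (by omega) (by omega)
      have := Nat.mul_le_mul_left c this
      omega
    have hid : c * a ^ (n + 1) - d = a * (c * a ^ n - d) + d * (a - 1) := by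
      have e1 : d ≤ c * a ^ n := le_of_lt hdn
      have e2 : d ≤ c * a ^ (n + 1) := le_of_lt hdn1
      have e3 : 1 ≤ a := by omega
      zify [e1, e2, e3]
      ring
    have hdds : (c * a ^ n - d) ∣ d * (a - 1) := by
      have h2 := hdvd _ hs1mem
      rw [hid] at h2
      have h3 := Nat.dvd_sub h2 (dvd_mul_left (c * a ^ n - d) a)
      simpa using h3
    have hle : c * a ^ n - d ≤ d * (a - 1) := Nat.le_of_dvd hdd0 hdds
    -- n = 1
    have hn1 : n = 1 := by
      by_contra hne
      have hn2 : 2 ≤ n := by omega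
      have e1 : a ^ 2 ≤ a ^ n := Nat.pow_le_pow_right (by omega) hn2
      have e2 : c * a ^ 2 ≤ c * a ^ n := Nat.mul_le_mul_left c e1
      have e3 : d * a + a ≤ c * a * a := by
        have : (d + 1) * a ≤ (c * a) * a := Nat.mul_le_mul_right a (by omega)
        nlinarith
      have e4 : c * a * a = c * a ^ 2 := by ring
      have e5 : d * (a - 1) + d = d * a := by
        rw [← Nat.mul_succ]; congr 1; omega
      omega
    subst hn1
    refine ⟨rfl, ?_⟩
    -- transfer to ℤ
    have hZ : ((c:ℤ) * a - d) ∣ ((d:ℤ) * ((a:ℤ) - 1)) := by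
      have e1 : d ≤ c * a ^ 1 := le_of_lt hdn
      have e3 : 1 ≤ a := by omega
      zify [e1, e3] at hdds
      simpa using hdds
    have hZ2 : ((c:ℤ) * a - d) ∣ (a:ℤ) * ((c:ℤ) - d) := by
      have : (a:ℤ) * ((c:ℤ) - d) = ((c:ℤ) * a - d) - (d:ℤ) * ((a:ℤ) - 1) := by ring
      rw [this]
      exact dvd_sub dvd_rfl hZ
    exact hcop.dvd_of_dvd_mul_left hZ2
  · intro hdiv
    have hgpos : 0 < c * a - d := by omega
    have hZ : ((c:ℤ) * a - (d:ℤ)) ∣ ((d:ℤ) * ((a:ℤ) - 1)) := by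
      have h2 : ((c:ℤ) * a - d) ∣ (a:ℤ) * ((c:ℤ) - d) := hdiv.mul_left a
      have e : (d:ℤ) * ((a:ℤ) - 1) = ((c:ℤ) * a - d) - (a:ℤ) * ((c:ℤ) - d) := by ring
      rw [e]
      exact dvd_sub dvd_rfl h2
    have hN : (c * a - d) ∣ d * (a - 1) := by
      have e1 : d ≤ c * a := le_of_lt hdca
      have e3 : 1 ≤ a := by omega
      zify [e1, e3]
      exact hZ
    have hgen : ∀ j, (c * a - d) ∣ (c * a ^ (1 + j) - d) := by
      intro j
      induction j with
      | zero => simpa using dvd_refl (c * a - d)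
      | succ j ih =>
        have hdj : d ≤ c * a ^ (1 + j) := by
          have : a ≤ a ^ (1 + j) := Nat.le_self_pow (by omega) a
          have := Nat.mul_le_mul_left c this
          omega
        have hdj' : d ≤ c * a ^ (1 + (j + 1)) := by
          have : a ≤ a ^ (1 + (j + 1)) := Nat.le_self_pow (by omega) a
          have := Nat.mul_le_mul_left c this
          omega
        have hid : c * a ^ (1 + (j + 1)) - d
            = a * (c * a ^ (1 + j) - d) + d * (a - 1) := by
          have e3 : 1 ≤ a := by omega
          zify [hdj, hdj', e3]
          ring
        rw [hid]
        exact dvd_add (ih.mul_left a) hN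
    have hSeq : S 1 = AddSubmonoid.closure {c * a - d} := by
      rw [hS 1]
      apply le_antisymm
      · rw [AddSubmonoid.closure_le]
        rintro x ⟨j, rfl⟩
        obtain ⟨k, hk⟩ := hgen j
        rw [hk]
        rw [SetLike.mem_coe, AddSubmonoid.mem_closure_singleton]
        exact ⟨k, by rw [smul_eq_mul]; ring⟩
      · rw [AddSubmonoid.closure_le]
        intro x hx
        rw [Set.mem_singleton_iff] at hx
        subst hx
        apply AddSubmonoid.subset_closure
        exact ⟨0, by norm_num⟩
    show (minGens (S 1)).ncard = 1
    rw [hSeq, minGens_closure_singleton _ (by omega), Set.ncard_singleton]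
end

section
/- Let a = 2. If k is a nonnegative integer such that 2^k ≤ c and d ≥ 1 + 2^n·(c − 2^k), then s_{n+k} = (s_0 + 2 + 2^n·(c − 2^k))·s_0 + (d − 1 − 2^n·(c − 2^k))·s_1, where both coefficients are nonnegative and their sum is 1 + c·2^n. -/
theorem le_mul_two_pow_of_le_two_mul {c d m : ℕ} (hd : d ≤ 2 * c) (hm : m ≠ 0) :
    d ≤ c * 2 ^ m :=
  hd.trans <| by rw [mul_comm]; exact Nat.mul_le_mul_left c (Nat.le_self_pow hm 2)

/-- With `s₀ = c x - d`, `s₁ = 2 c x - d` and `B = d - 1 - x (c - t)`, the left side is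
`(1 + c x) s₀ + B (s₁ - s₀) = (1 + c x) s₀ + B c x`, and the terms in `d` cancel. -/
theorem combination_eq_mul_mul_sub {R : Type*} [CommRing R] (c d x t : R) :
    (c * x - d + 2 + x * (c - t)) * (c * x - d) + (d - 1 - x * (c - t)) * (c * (x * 2) - d) =
      c * (x * x * t) - d := by
  ring

theorem stmt_6_general (c d n : ℕ) (hdca : d < 2 * c) (hn : 0 < n)
    (s : ℕ → ℕ) (hs : ∀ j, s j = c * 2 ^ (n + j) - d)
    (k : ℕ) (hk : 2 ^ k ≤ c) (hdk : (d : ℤ) ≥ 1 + 2 ^ n * ((c : ℤ) - 2 ^ k)) :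
    (s (n + k) : ℤ) =
        ((s 0 : ℤ) + 2 + 2 ^ n * ((c : ℤ) - 2 ^ k)) * (s 0 : ℤ) +
          ((d : ℤ) - 1 - 2 ^ n * ((c : ℤ) - 2 ^ k)) * (s 1 : ℤ) ∧
      0 ≤ (s 0 : ℤ) + 2 + 2 ^ n * ((c : ℤ) - 2 ^ k) ∧
      0 ≤ (d : ℤ) - 1 - 2 ^ n * ((c : ℤ) - 2 ^ k) ∧
      ((s 0 : ℤ) + 2 + 2 ^ n * ((c : ℤ) - 2 ^ k)) +
          ((d : ℤ) - 1 - 2 ^ n * ((c : ℤ) - 2 ^ k)) = 1 + c * 2 ^ n := by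
  have hcast (j : ℕ) : (s j : ℤ) = c * 2 ^ (n + j) - d := by
    rw [hs j, Nat.cast_sub (le_mul_two_pow_of_le_two_mul hdca.le (by omega))]
    push_cast
    rfl
  have hs0 : (s 0 : ℤ) = c * 2 ^ n - d := by simpa using hcast 0
  have hs1 : (s 1 : ℤ) = c * (2 ^ n * 2) - d := by rw [hcast 1, pow_succ]
  have hsnk : (s (n + k) : ℤ) = c * (2 ^ n * 2 ^ n * 2 ^ k) - d := by
    rw [hcast, ← pow_add, ← pow_add, add_assoc]
  have hgap : (0 : ℤ) ≤ 2 ^ n * ((c : ℤ) - 2 ^ k) :=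
    mul_nonneg (by positivity) (sub_nonneg.mpr (by exact_mod_cast hk))
  refine ⟨?_, by linarith [(s 0).cast_nonneg (α := ℤ)], by linarith, by rw [hs0]; ring⟩
  rw [hsnk, hs0, hs1, combination_eq_mul_mul_sub]

/-- case `a = 2`: if `2^k ≤ c` and `d ≥ 1 + 2^n·(c − 2^k)`, then
`s_{n+k} = (s_0 + 2 + 2^n·(c − 2^k))·s_0 + (d − 1 − 2^n·(c − 2^k))·s_1`, where
both coefficients are nonnegative and their sum is `1 + c·2^n`. -/
theorem stmt_6 (c d n : ℕ) (hc : 0 < c) (hd : 0 < d) (hdca : d < 2 * c)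
    (hdodd : Odd d) (hdc : Nat.Coprime d c) (hn : 0 < n)
    (s : ℕ → ℕ) (hs : ∀ j, s j = c * 2 ^ (n + j) - d)
    (k : ℕ) (hk : 2 ^ k ≤ c) (hdk : (d : ℤ) ≥ 1 + 2 ^ n * ((c : ℤ) - 2 ^ k)) :
    (s (n + k) : ℤ) =
        ((s 0 : ℤ) + 2 + 2 ^ n * ((c : ℤ) - 2 ^ k)) * (s 0 : ℤ) +
          ((d : ℤ) - 1 - 2 ^ n * ((c : ℤ) - 2 ^ k)) * (s 1 : ℤ) ∧
      0 ≤ (s 0 : ℤ) + 2 + 2 ^ n * ((c : ℤ) - 2 ^ k) ∧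
      0 ≤ (d : ℤ) - 1 - 2 ^ n * ((c : ℤ) - 2 ^ k) ∧
      ((s 0 : ℤ) + 2 + 2 ^ n * ((c : ℤ) - 2 ^ k)) +
          ((d : ℤ) - 1 - 2 ^ n * ((c : ℤ) - 2 ^ k)) = 1 + c * 2 ^ n :=
  stmt_6_general c d n hdca hn s hs k hk hdk
end

section
/- Let a = 2 and suppose c = 2^k − ∑_{i=0}^{k−1} r_i·2^i, where each r_i ∈ {0,1}. If s_0 ≥ 2·(∑_{i=0}^{k−1} r_i − 1), then s_{n+k} = (s_0 − 2·(∑_{i=0}^{k−1} r_i − 1))·s_0 + (d + ∑_{i=0}^{k−1} r_i − 1)·s_1 + ∑_{i=0}^{k−1} r_i·s_{n+i}, where all the coefficients are nonnegative and their sum is 1 + c·2^n. -/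
open Finset

/- Write `X = c·2^n`, so that `s_0 = X - d`, `s_1 = 2X - d` and `s_{n+i} = 2^{n+i}X - d`. The
binary expansion of `c` gives `∑ r_i·2^i = 2^k - c`, hence `∑ r_i·s_{n+i} = 2^{n+k}X - X² - d·∑ r_i`,
and the claimed recurrence becomes a polynomial identity in `X`, `d` and `∑ r_i`. The only
arithmetic care needed is that `s_j` is a truncated difference, which is exact since `d < 2c`. -/

theorem le_mul_two_pow_of_lt_two_mul {c d m : ℕ} (hdc : d < 2 * c) (hm : 0 < m) :
    d ≤ c * 2 ^ m :=
  calc d ≤ 2 * c := hdc.le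
    _ ≤ 2 ^ m * c := Nat.mul_le_mul_right c (Nat.le_self_pow hm.ne' 2)
    _ = c * 2 ^ m := mul_comm _ _

theorem mul_two_pow_sub_eq_of_eq_two_pow_sub_sum {R : Type*} [CommRing R] (c d : R) (n k : ℕ)
    (r : ℕ → R) (s : ℕ → R) (hs : ∀ j, s j = c * 2 ^ (n + j) - d)
    (hck : c = 2 ^ k - ∑ i ∈ range k, r i * 2 ^ i) :
    s (n + k) = (s 0 - 2 * ((∑ i ∈ range k, r i) - 1)) * s 0 +
      (d + (∑ i ∈ range k, r i) - 1) * s 1 + ∑ i ∈ range k, r i * s (n + i) := by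
  have hsum : ∑ i ∈ range k, r i * s (n + i) =
      c * 2 ^ (2 * n) * ∑ i ∈ range k, r i * 2 ^ i - d * ∑ i ∈ range k, r i := by
    rw [mul_sum, mul_sum, ← sum_sub_distrib]
    refine sum_congr rfl fun i _ => ?_
    rw [hs]
    ring
  rw [hsum, hs, hs 0, hs 1]
  linear_combination (-c * 2 ^ (2 * n)) * hck

theorem stmt_7_general (c d n : ℕ) (hd : 0 < d) (hdca : d < 2 * c)
    (hn : 0 < n)
    (s : ℕ → ℕ) (hs : ∀ j, s j = c * 2 ^ (n + j) - d)
    (k : ℕ) (r : ℕ → ℕ)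
    (hck : (c : ℤ) = 2 ^ k - ∑ i ∈ Finset.range k, (r i : ℤ) * 2 ^ i)
    (hs0 : (s 0 : ℤ) ≥ 2 * ((∑ i ∈ Finset.range k, (r i : ℤ)) - 1)) :
    (s (n + k) : ℤ) =
        ((s 0 : ℤ) - 2 * ((∑ i ∈ Finset.range k, (r i : ℤ)) - 1)) * (s 0 : ℤ) +
          ((d : ℤ) + (∑ i ∈ Finset.range k, (r i : ℤ)) - 1) * (s 1 : ℤ) +
          ∑ i ∈ Finset.range k, (r i : ℤ) * (s (n + i) : ℤ) ∧
      0 ≤ (s 0 : ℤ) - 2 * ((∑ i ∈ Finset.range k, (r i : ℤ)) - 1) ∧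
      0 ≤ (d : ℤ) + (∑ i ∈ Finset.range k, (r i : ℤ)) - 1 ∧
      ((s 0 : ℤ) - 2 * ((∑ i ∈ Finset.range k, (r i : ℤ)) - 1)) +
          ((d : ℤ) + (∑ i ∈ Finset.range k, (r i : ℤ)) - 1) +
          (∑ i ∈ Finset.range k, (r i : ℤ)) = 1 + c * 2 ^ n := by
  have hs_int : ∀ j, (s j : ℤ) = c * 2 ^ (n + j) - d := fun j => by
    rw [hs, Nat.cast_sub (le_mul_two_pow_of_lt_two_mul hdca (by omega))]
    push_cast
    rfl
  have hr_nonneg : 0 ≤ ∑ i ∈ range k, (r i : ℤ) := sum_nonneg fun i _ => by positivity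
  refine ⟨mul_two_pow_sub_eq_of_eq_two_pow_sub_sum _ _ n k _ _ hs_int hck, by linarith, by omega, ?_⟩
  rw [hs_int 0]
  ring

/-- case `a = 2`: suppose `c = 2^k − ∑_{i<k} r_i·2^i` with each
`r_i ∈ {0,1}`. If `s_0 ≥ 2·(∑_{i<k} r_i − 1)`, then
`s_{n+k} = (s_0 − 2·(∑ r_i − 1))·s_0 + (d + ∑ r_i − 1)·s_1 + ∑_{i<k} r_i·s_{n+i}`,
where all coefficients are nonnegative and their sum is `1 + c·2^n`. -/
theorem stmt_7 (c d n : ℕ) (hc : 0 < c) (hd : 0 < d) (hdca : d < 2 * c)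
    (hdodd : Odd d) (hdc : Nat.Coprime d c) (hn : 0 < n)
    (s : ℕ → ℕ) (hs : ∀ j, s j = c * 2 ^ (n + j) - d)
    (k : ℕ) (r : ℕ → ℕ) (hr : ∀ i < k, r i ≤ 1)
    (hck : (c : ℤ) = 2 ^ k - ∑ i ∈ Finset.range k, (r i : ℤ) * 2 ^ i)
    (hs0 : (s 0 : ℤ) ≥ 2 * ((∑ i ∈ Finset.range k, (r i : ℤ)) - 1)) :
    (s (n + k) : ℤ) =
        ((s 0 : ℤ) - 2 * ((∑ i ∈ Finset.range k, (r i : ℤ)) - 1)) * (s 0 : ℤ) +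
          ((d : ℤ) + (∑ i ∈ Finset.range k, (r i : ℤ)) - 1) * (s 1 : ℤ) +
          ∑ i ∈ Finset.range k, (r i : ℤ) * (s (n + i) : ℤ) ∧
      0 ≤ (s 0 : ℤ) - 2 * ((∑ i ∈ Finset.range k, (r i : ℤ)) - 1) ∧
      0 ≤ (d : ℤ) + (∑ i ∈ Finset.range k, (r i : ℤ)) - 1 ∧
      ((s 0 : ℤ) - 2 * ((∑ i ∈ Finset.range k, (r i : ℤ)) - 1)) +
          ((d : ℤ) + (∑ i ∈ Finset.range k, (r i : ℤ)) - 1) +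
          (∑ i ∈ Finset.range k, (r i : ℤ)) = 1 + c * 2 ^ n :=
  stmt_7_general c d n hd hdca hn s hs k r hck hs0
end

section
/- Let a ≥ 3 and suppose c = a^k − ∑_{i=0}^{k−1} r_i·a^i, where each r_i is an integer with 0 ≤ r_i < a. Then s_{n+k+1} = s_{n+k} + (a−1)·∑_{i=0}^{k−1} r_i·s_{n+i} + (d + ∑_{i=0}^{k−1} r_i)·s_1 + ((a−1)·s_0 + (a−2)·d − a·∑_{i=0}^{k−1} r_i)·s_0 holds in ℤ, and the sum of the coefficients in this representation equals 1 + (a−1)·c·a^n. -/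
/-! Substituting `s_j = c·a^{n+j} − d`, both sides of the recurrence are polynomials in
`c·a^n` and `d`; after expanding `∑ r_i·s_{n+i} = c·a^{2n}·∑ r_i·a^i − d·∑ r_i`, the difference
of the two sides is `c·a^{2n}·(a − 1)·(a^k − c − ∑ r_i·a^i)`, which vanishes by the
base-`a` expansion of `c`. -/

theorem Nat.cast_mul_pow_sub_of_lt {c d a m : ℕ} (hdca : d < c * a) (hm : 1 ≤ m) :
    ((c * a ^ m - d : ℕ) : ℤ) = c * a ^ m - d := by
  have ha : 0 < a := Nat.pos_of_ne_zero fun h => by simp [h] at hdca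
  have hle : d ≤ c * a ^ m :=
    calc d ≤ c * a := hdca.le
      _ = c * a ^ 1 := by rw [pow_one]
      _ ≤ c * a ^ m := Nat.mul_le_mul_left c (Nat.pow_le_pow_right ha hm)
  push_cast [hle]
  ring

section Recurrence

variable {R : Type*} [CommRing R] {a c d : R} {n k : ℕ} {r : ℕ → R} {s : ℕ → R}

theorem sum_mul_shifted_eq (hs : ∀ j, s j = c * a ^ (n + j) - d) :
    ∑ i ∈ Finset.range k, r i * s (n + i) =
      c * a ^ n * a ^ n * ∑ i ∈ Finset.range k, r i * a ^ i - d * ∑ i ∈ Finset.range k, r i := by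
  simp only [Finset.mul_sum, ← Finset.sum_sub_distrib, hs]
  refine Finset.sum_congr rfl fun i _ => ?_
  ring

theorem recurrence_of_base_expansion (hs : ∀ j, s j = c * a ^ (n + j) - d)
    (hck : c = a ^ k - ∑ i ∈ Finset.range k, r i * a ^ i) :
    s (n + k + 1) =
      s (n + k) + (a - 1) * ∑ i ∈ Finset.range k, r i * s (n + i) +
        (d + ∑ i ∈ Finset.range k, r i) * s 1 +
        ((a - 1) * s 0 + (a - 2) * d - a * ∑ i ∈ Finset.range k, r i) * s 0 := by
  rw [sum_mul_shifted_eq hs, hs, hs, hs, hs]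
  linear_combination (-(c * a ^ n * a ^ n * (a - 1))) * hck

theorem recurrence_coeff_sum (hs : ∀ j, s j = c * a ^ (n + j) - d) (ρ : R) :
    1 + (a - 1) * ρ + (d + ρ) + ((a - 1) * s 0 + (a - 2) * d - a * ρ) =
      1 + (a - 1) * c * a ^ n := by
  rw [hs, add_zero]
  ring

end Recurrence

theorem stmt_8_general (a c d n : ℕ)
    (hdca : d < c * a) (hn : 0 < n)
    (s : ℕ → ℕ) (hs : ∀ j, s j = c * a ^ (n + j) - d)
    (k : ℕ) (r : ℕ → ℕ)
    (hck : (c : ℤ) = a ^ k - ∑ i ∈ Finset.range k, (r i : ℤ) * a ^ i) :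
    (s (n + k + 1) : ℤ) =
        (s (n + k) : ℤ) +
          ((a : ℤ) - 1) * ∑ i ∈ Finset.range k, (r i : ℤ) * (s (n + i) : ℤ) +
          ((d : ℤ) + ∑ i ∈ Finset.range k, (r i : ℤ)) * (s 1 : ℤ) +
          (((a : ℤ) - 1) * (s 0 : ℤ) + ((a : ℤ) - 2) * d -
              a * ∑ i ∈ Finset.range k, (r i : ℤ)) * (s 0 : ℤ) ∧
      1 + ((a : ℤ) - 1) * (∑ i ∈ Finset.range k, (r i : ℤ)) +
          ((d : ℤ) + ∑ i ∈ Finset.range k, (r i : ℤ)) +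
          (((a : ℤ) - 1) * (s 0 : ℤ) + ((a : ℤ) - 2) * d -
              a * ∑ i ∈ Finset.range k, (r i : ℤ)) =
        1 + ((a : ℤ) - 1) * c * a ^ n := by
  have hsz : ∀ j, (s j : ℤ) = c * a ^ (n + j) - d := fun j => by
    rw [hs j, Nat.cast_mul_pow_sub_of_lt hdca (by omega)]
  exact ⟨recurrence_of_base_expansion hsz hck,
    recurrence_coeff_sum hsz _⟩

/-- case `a ≥ 3`: suppose `c = a^k − ∑_{i<k} r_i·a^i` with
`0 ≤ r_i < a`. Then, in ℤ,
`s_{n+k+1} = s_{n+k} + (a−1)·∑_{i<k} r_i·s_{n+i} + (d + ∑ r_i)·s_1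
  + ((a−1)·s_0 + (a−2)·d − a·∑ r_i)·s_0`,
and the sum of the coefficients in this representation is `1 + (a−1)·c·a^n`. -/
theorem stmt_8 (a c d n : ℕ) (ha : 3 ≤ a) (hc : 0 < c) (hd : 0 < d)
    (hdca : d < c * a) (hda : Nat.Coprime d a) (hdc : Nat.Coprime d c) (hn : 0 < n)
    (s : ℕ → ℕ) (hs : ∀ j, s j = c * a ^ (n + j) - d)
    (k : ℕ) (r : ℕ → ℕ) (hr : ∀ i < k, r i < a)
    (hck : (c : ℤ) = a ^ k - ∑ i ∈ Finset.range k, (r i : ℤ) * a ^ i) :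
    (s (n + k + 1) : ℤ) =
        (s (n + k) : ℤ) +
          ((a : ℤ) - 1) * ∑ i ∈ Finset.range k, (r i : ℤ) * (s (n + i) : ℤ) +
          ((d : ℤ) + ∑ i ∈ Finset.range k, (r i : ℤ)) * (s 1 : ℤ) +
          (((a : ℤ) - 1) * (s 0 : ℤ) + ((a : ℤ) - 2) * d -
              a * ∑ i ∈ Finset.range k, (r i : ℤ)) * (s 0 : ℤ) ∧
      1 + ((a : ℤ) - 1) * (∑ i ∈ Finset.range k, (r i : ℤ)) +
          ((d : ℤ) + ∑ i ∈ Finset.range k, (r i : ℤ)) +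
          (((a : ℤ) - 1) * (s 0 : ℤ) + ((a : ℤ) - 2) * d -
              a * ∑ i ∈ Finset.range k, (r i : ℤ)) =
        1 + ((a : ℤ) - 1) * c * a ^ n :=
  stmt_8_general a c d n hdca hn s hs k r hck
end

section
/- Let m be a positive integer and suppose s_m = α_0·s_0 + α_1·s_1 + ⋯ + α_{m−1}·s_{m−1} for integers α_0, …, α_{m−1}. Then there exists an integer t such that ∑_{j=0}^{m−1} α_j = 1 + t·c·a^n. Moreover, if all the α_j are nonnegative, then t > 0. -/
/-!
Write `K = c·aⁿ`, so that `s_j = K·a^j − d`. Comparing the two sides of the relation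
gives `d·(∑ α_j − 1) = K·(∑ α_j a^j − a^m)`, and `d` is coprime to `K`, so
`K ∣ ∑ α_j − 1`. If the `α_j` are nonnegative, monotonicity of `s` gives
`s_{m−1} < s_m ≤ (∑ α_j)·s_{m−1}`, hence `∑ α_j > 1` and `t > 0`.
-/

open Finset

section Relation

variable {R : Type*} [CommRing R] {K a d : R} {s : ℕ → R}

theorem mul_sum_sub_one_eq_of_eq_sum_mul (hs : ∀ j, s j = K * a ^ j - d) {m : ℕ}
    {α : ℕ → R} (h : s m = ∑ j ∈ range m, α j * s j) :
    d * (∑ j ∈ range m, α j - 1) = K * (∑ j ∈ range m, α j * a ^ j - a ^ m) := by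
  have hsum : ∑ j ∈ range m, α j * s j =
      K * ∑ j ∈ range m, α j * a ^ j - d * ∑ j ∈ range m, α j := by
    simp only [hs, mul_sum, ← sum_sub_distrib]
    exact sum_congr rfl fun j _ => by ring
  rw [hs, hsum] at h
  linear_combination h

theorem dvd_sum_sub_one_of_eq_sum_mul (hs : ∀ j, s j = K * a ^ j - d) (hKd : IsCoprime K d)
    {m : ℕ} {α : ℕ → R} (h : s m = ∑ j ∈ range m, α j * s j) :
    K ∣ ∑ j ∈ range m, α j - 1 :=
  hKd.dvd_of_dvd_mul_left ⟨_, mul_sum_sub_one_eq_of_eq_sum_mul hs h⟩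

end Relation

theorem one_lt_sum_of_eq_sum_mul {R : Type*} [CommRing R] [LinearOrder R]
    [IsStrictOrderedRing R] {s : ℕ → R} (hs : StrictMono s) (hs₀ : 0 ≤ s 0) {m : ℕ}
    (hm : 0 < m) {α : ℕ → R}
    (hα : ∀ j < m, 0 ≤ α j) (h : s m = ∑ j ∈ range m, α j * s j) :
    1 < ∑ j ∈ range m, α j := by
  obtain ⟨k, rfl⟩ : ∃ k, m = k + 1 := ⟨m - 1, by omega⟩
  have hsk : 0 ≤ s k := hs₀.trans (hs.monotone k.zero_le)
  have hle : s (k + 1) ≤ (∑ j ∈ range (k + 1), α j) * s k := by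
    rw [h, sum_mul]
    refine sum_le_sum fun j hj => mul_le_mul_of_nonneg_left ?_ (hα j (mem_range.mp hj))
    exact hs.monotone (Nat.lt_succ_iff.mp (mem_range.mp hj))
  by_contra! hS
  exact (hs k.lt_succ_self).not_ge (hle.trans (mul_le_of_le_one_left hsk hS))

theorem le_mul_pow_of_lt_mul {a c d : ℕ} (ha : 1 ≤ a) (hdca : d < c * a) {k : ℕ}
    (hk : 0 < k) : d ≤ c * a ^ k :=
  calc d ≤ c * a ^ 1 := by rw [pow_one]; exact hdca.le
    _ ≤ c * a ^ k := Nat.mul_le_mul_left _ (Nat.pow_le_pow_right ha hk)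

theorem stmt_9_general (a c d n : ℕ) (ha : 2 ≤ a) (hc : 0 < c)
    (hdca : d < c * a) (hda : Nat.Coprime d a) (hdc : Nat.Coprime d c) (hn : 0 < n)
    (s : ℕ → ℕ) (hs : ∀ j, s j = c * a ^ (n + j) - d)
    (m : ℕ) (hm : 0 < m) (α : ℕ → ℤ)
    (h : (s m : ℤ) = ∑ j ∈ Finset.range m, α j * (s j : ℤ)) :
    ∃ t : ℤ, (∑ j ∈ Finset.range m, α j) = 1 + t * c * a ^ n ∧
      ((∀ j < m, 0 ≤ α j) → 0 < t) := by
  have hsK : ∀ j, (s j : ℤ) = c * a ^ n * a ^ j - d := fun j => by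
    rw [hs j, Nat.cast_sub (le_mul_pow_of_lt_mul (by omega) hdca (by omega))]
    push_cast
    ring
  have hKd : IsCoprime ((c : ℤ) * a ^ n) d := by
    exact_mod_cast Nat.isCoprime_iff_coprime.mpr (hdc.mul_right (hda.pow_right n)).symm
  have hK : (0 : ℤ) < c * a ^ n := by positivity
  have hmono : StrictMono fun j => (s j : ℤ) := by
    intro i j hij
    simp only [hsK]
    have hpow : (a : ℤ) ^ i < a ^ j := pow_right_strictMono₀ (by exact_mod_cast ha) hij
    exact sub_lt_sub_right (mul_lt_mul_of_pos_left hpow hK) _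
  obtain ⟨t, ht⟩ := dvd_sum_sub_one_of_eq_sum_mul hsK hKd h
  refine ⟨t, by linear_combination ht, fun hα => ?_⟩
  have hS := one_lt_sum_of_eq_sum_mul hmono (Int.natCast_nonneg _) hm hα h
  exact pos_of_mul_pos_right (ht ▸ sub_pos.mpr hS) hK.le

/-- if `s_m = α_0·s_0 + ⋯ + α_{m−1}·s_{m−1}` with integer
coefficients `α_j` and `m > 0`, then `∑_{j<m} α_j = 1 + t·c·a^n` for some
integer `t`; moreover if all the `α_j` are nonnegative, then `t > 0`. -/
theorem stmt_9 (a c d n : ℕ) (ha : 2 ≤ a) (hc : 0 < c) (hd : 0 < d)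
    (hdca : d < c * a) (hda : Nat.Coprime d a) (hdc : Nat.Coprime d c) (hn : 0 < n)
    (s : ℕ → ℕ) (hs : ∀ j, s j = c * a ^ (n + j) - d)
    (m : ℕ) (hm : 0 < m) (α : ℕ → ℤ)
    (h : (s m : ℤ) = ∑ j ∈ Finset.range m, α j * (s j : ℤ)) :
    ∃ t : ℤ, (∑ j ∈ Finset.range m, α j) = 1 + t * c * a ^ n ∧
      ((∀ j < m, 0 ≤ α j) → 0 < t) :=
  stmt_9_general a c d n ha hc hdca hda hdc hn s hs m hm α h
end

section
/- For every positive integer n, the embedding dimension of S_n satisfies e(S_n) ≥ n. -/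
/-- Two minimal generators congruent modulo `m ∈ M` are equal, since otherwise the larger one is
the smaller one plus a multiple of `m`. -/
lemma minGens_finite {M : AddSubmonoid ℕ} {m : ℕ} (hm : m ∈ M) (hm0 : m ≠ 0) :
    (minGens M).Finite := by
  have hinj : Set.InjOn (· % m) (minGens M) := by
    suffices ∀ x ∈ minGens M, ∀ y ∈ minGens M, x % m = y % m → ¬x < y by
      intro x hx y hy hxy
      by_contra hne
      rcases Nat.lt_or_gt_of_ne hne with h | h
      exacts [this x hx y hy hxy h, this y hy x hx hxy.symm h]
    intro x hx y hy hxy hlt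
    obtain ⟨t, ht⟩ := (Nat.modEq_iff_dvd' hlt.le).mp hxy
    have hmem : y - x ∈ M := ht ▸ mul_comm t m ▸ AddSubmonoid.nsmul_mem M hm t
    exact hy.2.2 ⟨x, hx.1, y - x, hmem, hx.2.1, by omega, by omega⟩
  refine Set.Finite.of_finite_image ((Set.finite_Iio m).subset ?_) hinj
  rintro _ ⟨x, -, rfl⟩
  exact Nat.mod_lt _ (Nat.pos_of_ne_zero hm0)

lemma Finset.card_le_edim {M : AddSubmonoid ℕ} (t : Finset ℕ) (ht : ↑t ⊆ minGens M) :
    t.card ≤ edim M := by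
  rcases t.eq_empty_or_nonempty with rfl | ⟨x, hx⟩
  · exact Nat.zero_le _
  · have hfin := minGens_finite (ht hx).1 (ht hx).2.1
    exact (Set.ncard_coe_finset t).symm.le.trans (Set.ncard_le_ncard ht hfin)

section Congruence

variable {G : Set ℕ} {m d b : ℕ}

/-- `k` counts the summands when `x` is written as a sum of elements of `G`. -/
lemma exists_summand_count_of_mem_closure (hG : ∀ g ∈ G, m ∣ g + d ∧ b ≤ g) {x : ℕ}
    (hx : x ∈ AddSubmonoid.closure G) :
    ∃ k, m ∣ x + k * d ∧ k * b ≤ x ∧ (k = 0 → x = 0) := by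
  induction hx using AddSubmonoid.closure_induction with
  | mem g hg => exact ⟨1, by simpa using (hG g hg).1, by simpa using (hG g hg).2, by simp⟩
  | zero => exact ⟨0, by simp, by simp, fun _ => rfl⟩
  | add y z _ _ hy hz =>
    obtain ⟨k, hdk, hbk, hk0⟩ := hy
    obtain ⟨l, hdl, hbl, hl0⟩ := hz
    refine ⟨k + l, ?_, by linarith [add_mul k l b],
      fun h => by simp [hk0 (by omega), hl0 (by omega)]⟩
    simpa [add_mul, add_add_add_comm] using dvd_add hdk hdl

lemma mem_minGens_closure_of_lt (hG : ∀ g ∈ G, m ∣ g + d ∧ b ≤ g) (hmd : m.Coprime d)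
    {x : ℕ} (hx : x ∈ G) (hxb : x < (m + 1) * b) :
    x ∈ minGens (AddSubmonoid.closure G) := by
  have hbx := (hG x hx).2
  have hb : 0 < b := Nat.pos_of_ne_zero fun h => by simp [h] at hxb
  refine ⟨AddSubmonoid.subset_closure hx, by omega, ?_⟩
  rintro ⟨y, hy, z, hz, hy0, hz0, rfl⟩
  obtain ⟨k, hdk, hbk, hk0⟩ := exists_summand_count_of_mem_closure hG hy
  obtain ⟨l, hdl, hbl, hl0⟩ := exists_summand_count_of_mem_closure hG hz
  obtain ⟨r, hr⟩ : ∃ r, k + l = r + 2 :=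
    ⟨k + l - 2, by have := mt hk0 hy0; have := mt hl0 hz0; omega⟩
  have hdvd : m ∣ (r + 1) * d := by
    have hsum := dvd_add hdk hdl
    rw [show y + k * d + (z + l * d) = (y + z + d) + (r + 1) * d by
      have := congrArg (· * d) hr; simp only [add_mul] at this; linarith] at hsum
    exact (Nat.dvd_add_right (hG _ hx).1).mp hsum
  have hm : m ≤ r + 1 := Nat.le_of_dvd (by omega) (hmd.dvd_of_dvd_mul_right hdvd)
  have : (m + 1) * b ≤ (k + l) * b := Nat.mul_le_mul_right b (by omega)
  linarith [add_mul k l b]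

end Congruence

/-- With `p = a ^ (n - 1)` this reduces to `p + a ≤ p * a + 1`, i.e. `(p - 1) (a - 1) ≥ 0`. -/
lemma mul_pow_sub_lt {a c d n j : ℕ} (ha : 1 ≤ a) (hd : d < c * a) (hj : j < n) :
    c * a ^ (n + j) - d < (a ^ n + 1) * (c * a ^ n - d) := by
  obtain ⟨p, hp, hpa, hnj⟩ : ∃ p, 1 ≤ p ∧ a ^ n = p * a ∧ a ^ (n + j) ≤ p * a * p := by
    refine ⟨a ^ (n - 1), Nat.one_le_pow _ _ ha, ?_, ?_⟩
    · rw [← pow_succ]; congr 1; omega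
    · rw [← pow_succ, ← pow_add]; exact Nat.pow_le_pow_right ha (by omega)
  rw [hpa]
  have h1 : d ≤ c * (p * a) := hd.le.trans (by nlinarith)
  have h2 : c * (p * a) ≤ c * a ^ (n + j) :=
    Nat.mul_le_mul_left c (hpa ▸ Nat.pow_le_pow_right ha (by omega))
  have h3 : c * a ^ (n + j) ≤ c * (p * a * p) := Nat.mul_le_mul_left c hnj
  zify [h1, h1.trans h2] at *
  nlinarith [mul_nonneg (sub_nonneg.mpr (show (1 : ℤ) ≤ p by exact_mod_cast hp))
    (sub_nonneg.mpr (show (1 : ℤ) ≤ a by exact_mod_cast ha)), show (0 : ℤ) ≤ c by positivity]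

theorem stmt_10_general (a c d : ℕ) (ha : 2 ≤ a)
    (hdca : d < c * a) (hda : Nat.Coprime d a)
    (S : ℕ → AddSubmonoid ℕ)
    (hS : ∀ n, S n = AddSubmonoid.closure {x | ∃ j : ℕ, x = c * a ^ (n + j) - d}) :
    ∀ n : ℕ, 0 < n → n ≤ edim (S n) := by
  intro n hn
  set s : ℕ → ℕ := fun j => c * a ^ (n + j) - d
  have hc : 0 < c := Nat.pos_of_ne_zero fun h => by simp [h] at hdca
  have hds : ∀ j, d ≤ c * a ^ (n + j) := fun j =>
    hdca.le.trans (Nat.mul_le_mul_left c (Nat.le_self_pow (by omega) a))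
  have hs : StrictMono s := fun i j hij =>
    Nat.sub_lt_sub_right (hds i) (Nat.mul_lt_mul_of_pos_left
      (Nat.pow_lt_pow_right ha (by omega)) hc)
  have hgen : ∀ g ∈ {x | ∃ j : ℕ, x = c * a ^ (n + j) - d}, a ^ n ∣ g + d ∧ s 0 ≤ g := by
    rintro _ ⟨j, rfl⟩
    refine ⟨⟨c * a ^ j, ?_⟩, hs.monotone (Nat.zero_le j)⟩
    rw [Nat.sub_add_cancel (hds j), pow_add]; ring
  calc n = ((Finset.range n).image s).card := by
        rw [Finset.card_image_of_injective _ hs.injective, Finset.card_range]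
    _ ≤ edim (S n) := Finset.card_le_edim _ fun x hx => by
        obtain ⟨j, hj, rfl⟩ := by simpa using hx
        rw [hS n]
        exact mem_minGens_closure_of_lt hgen (hda.pow_right n).symm ⟨j, rfl⟩
          (by simpa [s] using mul_pow_sub_lt (by omega) hdca hj)

/-- for every positive integer `n`, `e(S_n) ≥ n`. -/
theorem stmt_10 (a c d : ℕ) (ha : 2 ≤ a) (hc : 0 < c) (hd : 0 < d)
    (hdca : d < c * a) (hda : Nat.Coprime d a) (hdc : Nat.Coprime d c)
    (S : ℕ → AddSubmonoid ℕ)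
    (hS : ∀ n, S n = AddSubmonoid.closure {x | ∃ j : ℕ, x = c * a ^ (n + j) - d}) :
    ∀ n : ℕ, 0 < n → n ≤ edim (S n) :=
  stmt_10_general a c d ha hdca hda S hS
end

section
/- Let e = gcd of the elements of S_n. Suppose that for some positive integer m, s_m = α_0·s_0 + ⋯ + α_{m−1}·s_{m−1} with all α_j nonnegative integers and ∑_{j=0}^{m−1} α_j = 1 + t·c·a^n for some positive integer t. Then: (1) if t = 1 and s_0 ≥ a^{m−1}, then e(S_n) = m; (2) if t = a−1 and ((a−1)/e)·s_0 ≥ a^{m−1}, then e(S_n) = m. -/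
lemma rep_of_mem_closure (s : ℕ → ℕ) {x : ℕ} (hx : x ∈ AddSubmonoid.closure (Set.range s)) :
    ∃ (K : ℕ) (β : ℕ → ℕ), (∀ i, K ≤ i → β i = 0) ∧ x = ∑ i ∈ Finset.range K, β i * s i := by
  induction hx using AddSubmonoid.closure_induction with
  | mem x hx =>
      obtain ⟨j, rfl⟩ := hx
      refine ⟨j + 1, fun i => if i = j then 1 else 0, fun i hi => if_neg (by omega), ?_⟩
      have h : ∀ i ∈ Finset.range (j+1), (if i = j then 1 else 0) * s i
          = if i = j then s j else 0 := by
        intro i _; split <;> simp_all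
      rw [Finset.sum_congr rfl h, Finset.sum_ite_eq' (Finset.range (j+1)) j (fun _ => s j)]
      simp
  | zero => exact ⟨0, fun _ => 0, fun _ _ => rfl, by simp⟩
  | add x y hx hy ihx ihy =>
      obtain ⟨K₁, β₁, hz₁, rfl⟩ := ihx
      obtain ⟨K₂, β₂, hz₂, rfl⟩ := ihy
      refine ⟨max K₁ K₂, fun i => β₁ i + β₂ i, fun i hi => by
        show β₁ i + β₂ i = 0
        rw [hz₁ i (le_trans (le_max_left _ _) hi), hz₂ i (le_trans (le_max_right _ _) hi)], ?_⟩
      have e₁ : ∑ i ∈ Finset.range K₁, β₁ i * s i = ∑ i ∈ Finset.range (max K₁ K₂), β₁ i * s i :=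
        Finset.sum_subset (Finset.range_subset_range.mpr (le_max_left _ _))
          (fun i hi hni => by rw [hz₁ i (by simp at hi hni ⊢; omega), zero_mul])
      have e₂ : ∑ i ∈ Finset.range K₂, β₂ i * s i = ∑ i ∈ Finset.range (max K₁ K₂), β₂ i * s i :=
        Finset.sum_subset (Finset.range_subset_range.mpr (le_max_right _ _))
          (fun i hi hni => by rw [hz₂ i (by simp at hi hni ⊢; omega), zero_mul])
      rw [e₁, e₂, ← Finset.sum_add_distrib]
      exact Finset.sum_congr rfl fun i _ => (add_mul _ _ _).symm

set_option maxHeartbeats 3200000 in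
/-- let `e` be the gcd of the elements of `S_n`. Suppose
`s_m = α_0·s_0 + ⋯ + α_{m−1}·s_{m−1}` with nonnegative integer coefficients
summing to `1 + t·c·a^n` for some `t > 0`. Then:
(1) if `t = 1` and `s_0 ≥ a^{m−1}`, then `e(S_n) = m`;
(2) if `t = a−1` and `((a−1)/e)·s_0 ≥ a^{m−1}`, then `e(S_n) = m`. -/
theorem stmt_12 (a c d n : ℕ) (ha : 2 ≤ a) (hc : 0 < c) (hd : 0 < d)
    (hdca : d < c * a) (hda : Nat.Coprime d a) (hdc : Nat.Coprime d c) (hn : 0 < n)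
    (s : ℕ → ℕ) (hs : ∀ j, s j = c * a ^ (n + j) - d)
    (e : ℕ)
    (he1 : ∀ x ∈ AddSubmonoid.closure (Set.range s), e ∣ x)
    (he2 : ∀ k : ℕ, (∀ x ∈ AddSubmonoid.closure (Set.range s), k ∣ x) → k ∣ e)
    (m : ℕ) (hm : 0 < m) (α : ℕ → ℕ)
    (hα : s m = ∑ j ∈ Finset.range m, α j * s j)
    (t : ℕ) (ht : 0 < t)
    (hαsum : ∑ j ∈ Finset.range m, α j = 1 + t * c * a ^ n) :
    (t = 1 → a ^ (m - 1) ≤ s 0 →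
      edim (AddSubmonoid.closure (Set.range s)) = m) ∧
    (t = a - 1 → a ^ (m - 1) ≤ ((a - 1) / e) * s 0 →
      edim (AddSubmonoid.closure (Set.range s)) = m) := by
  have ha1 : 1 ≤ a := by omega
  set M := AddSubmonoid.closure (Set.range s) with hMdef
  set X := c * a ^ n with hXdef
  have hXpos : 0 < X := by positivity
  have hdlt : ∀ j, d < c * a ^ (n + j) := by
    intro j
    calc d < c * a := hdca
    _ ≤ c * a ^ (n + j) := Nat.mul_le_mul_left c (Nat.le_self_pow (by omega) a)
  have hdX : d < X := by simpa using hdlt 0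
  have hsd : ∀ j, s j + d = c * a ^ (n + j) := fun j => by
    rw [hs j]; exact Nat.sub_add_cancel (hdlt j).le
  have hsdX : ∀ j, s j + d = X * a ^ j := fun j => by rw [hsd j, hXdef, pow_add]; ring
  have hspos : ∀ j, 0 < s j := fun j => by have h1 := hsdX j; nlinarith [hdlt j, hsd j]
  have hsmono : StrictMono s := by
    apply strictMono_nat_of_lt_succ
    intro j
    have h1 := hsd j; have h2 := hsd (j + 1)
    have h3 : c * a ^ (n + j) < c * a ^ (n + (j + 1)) := by
      have := Nat.pow_lt_pow_right (by omega : 1 < a) (by omega : n + j < n + (j + 1))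
      exact Nat.mul_lt_mul_of_le_of_lt (le_refl c) this hc
    omega
  have hgen : ∀ j, s j ∈ M := fun j => AddSubmonoid.subset_closure ⟨j, rfl⟩
  have hmul_mem : ∀ (b i : ℕ), b * s i ∈ M := fun b i => by
    simpa [nsmul_eq_mul] using nsmul_mem (hgen i) b
  -- coprimality
  have hXs0 : X = s 0 + d := by
    have h := hsdX 0
    simp only [pow_zero, mul_one] at h
    omega
  have hextm : ∀ (K K' : ℕ) (γ g : ℕ → ℕ), (∀ i, K ≤ i → γ i = 0) → K ≤ K' →
      ∑ i ∈ Finset.range K, γ i * g i = ∑ i ∈ Finset.range K', γ i * g i := by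
    intro K K' γ g hzero hKK'
    refine Finset.sum_subset (Finset.range_subset_range.mpr hKK') (fun i hi hni => ?_)
    rw [hzero i (by simp [Finset.mem_range] at hi hni; omega), zero_mul]
  have hextc : ∀ (K K' : ℕ) (γ : ℕ → ℕ), (∀ i, K ≤ i → γ i = 0) → K ≤ K' →
      ∑ i ∈ Finset.range K, γ i = ∑ i ∈ Finset.range K', γ i := by
    intro K K' γ hzero hKK'
    refine Finset.sum_subset (Finset.range_subset_range.mpr hKK') (fun i hi hni => ?_)
    exact hzero i (by simp [Finset.mem_range] at hi hni; omega)
  have hcop : Nat.Coprime d X := hdc.mul_right (hda.pow_right n)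
  -- digit equation analysis
  have hdigit : ∀ (K : ℕ) (β : ℕ → ℕ) (j : ℕ), (∑ i ∈ Finset.range K, β i * s i) = s j →
      ∃ T : ℕ, (∑ i ∈ Finset.range K, β i * a ^ i) = a ^ j + T * d ∧
        (∑ i ∈ Finset.range K, β i) = 1 + T * X := by
    intro K β j hsum
    set A := ∑ i ∈ Finset.range K, β i * a ^ i with hA
    set N := ∑ i ∈ Finset.range K, β i with hN
    have h1 : ∑ i ∈ Finset.range K, β i * (s i + d) = X * A := by
      rw [hA, Finset.mul_sum]
      refine Finset.sum_congr rfl fun i _ => ?_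
      rw [hsdX i]; ring
    have h2 : ∑ i ∈ Finset.range K, β i * (s i + d) = s j + N * d := by
      simp only [Nat.mul_add, Finset.sum_add_distrib, hsum, ← Finset.sum_mul, hN]
    have h12 : X * A = s j + N * d := by rw [← h1, h2]
    have h3 : X * A + d = X * a ^ j + N * d := by
      calc X * A + d = s j + N * d + d := by rw [h12]
      _ = (s j + d) + N * d := by ring
      _ = X * a ^ j + N * d := by rw [hsdX j]
    have hN1 : 1 ≤ N := by
      rcases Nat.eq_zero_or_pos N with h | h
      · exfalso
        have hz : ∀ i ∈ Finset.range K, β i = 0 := Finset.sum_eq_zero_iff.mp (hN.symm.trans h)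
        have hs0 : s j = 0 := by
          rw [← hsum]
          exact Finset.sum_eq_zero fun i hi => by rw [hz i hi, zero_mul]
        have := hspos j
        omega
      · exact h
    have hAj : a ^ j ≤ A := by
      by_contra hcon
      push_neg at hcon
      have h5 : X * (A + 1) ≤ X * a ^ j := Nat.mul_le_mul_left X hcon
      have h6 : X * (A + 1) = X * A + X := by ring
      linarith [h3, hdX, Nat.zero_le (N * d)]
    obtain ⟨Δ, hΔ⟩ := Nat.le.dest hAj
    have h8 : X * Δ + d = N * d := by
      have hexp : X * A = X * a ^ j + X * Δ := by rw [← hΔ]; ring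
      linarith [h3, hexp]
    obtain ⟨N', hN'⟩ := Nat.le.dest hN1
    have h9 : X * Δ = N' * d := by
      have h10 : N * d = d + N' * d := by rw [← hN']; ring
      linarith [h8, h10]
    have h11 : X ∣ N' := (Nat.Coprime.dvd_of_dvd_mul_right hcop.symm ⟨Δ, h9.symm⟩)
    obtain ⟨T, hT⟩ := h11
    refine ⟨T, ?_, ?_⟩
    · have h13 : X * Δ = X * (T * d) := by rw [h9, hT]; ring
      have h14 : Δ = T * d := Nat.eq_of_mul_eq_mul_left hXpos h13
      rw [← hΔ, h14]
    · rw [← hN', hT]; ring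
  -- the coefficient relation in digit form, for α
  have hαdigit : (∑ j ∈ Finset.range m, α j * a ^ j) = a ^ m + t * d := by
    obtain ⟨T, hT1, hT2⟩ := hdigit m α m hα.symm
    have h1 : 1 + T * X = 1 + t * X := by
      rw [← hT2, hαsum, hXdef]; ring
    have hTt : T = t := Nat.eq_of_mul_eq_mul_right hXpos (by omega : T * X = t * X)
    rw [hT1, hTt]
  -- α 0 is large, given t * s 0 is large
  have hα0 : a ^ (m - 1) ≤ t * s 0 → t * d < α 0 := by
    intro hts0
    obtain ⟨m', rfl⟩ : ∃ m', m = m' + 1 := ⟨m - 1, by omega⟩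
    simp only [Nat.add_sub_cancel] at hts0
    have hA : (∑ j ∈ Finset.range (m' + 1), α j * a ^ j)
        = (∑ i ∈ Finset.range m', α (i + 1) * a ^ (i + 1)) + α 0 := by
      rw [Finset.sum_range_succ']; simp
    have hNX : (∑ j ∈ Finset.range (m' + 1), α j) = 1 + t * X := by
      rw [hαsum, hXdef]; ring
    have hNsum : (∑ j ∈ Finset.range (m' + 1), α j)
        = (∑ i ∈ Finset.range m', α (i + 1)) + α 0 := by
      rw [Finset.sum_range_succ']
    have hsumle : a * (∑ i ∈ Finset.range m', α (i + 1))
        ≤ ∑ i ∈ Finset.range m', α (i + 1) * a ^ (i + 1) := by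
      rw [Finset.mul_sum]
      refine Finset.sum_le_sum fun i _ => ?_
      calc a * α (i + 1) = α (i + 1) * a := by ring
      _ ≤ α (i + 1) * a ^ (i + 1) := Nat.mul_le_mul_left _ (Nat.le_self_pow (by omega) a)
    have hmaster : a * (1 + t * X) + α 0 ≤ a * α 0 + (a ^ (m' + 1) + t * d) := by
      have e1 : a * (1 + t * X) = a * (∑ i ∈ Finset.range m', α (i + 1)) + a * α 0 := by
        rw [← hNX, hNsum]; ring
      have e2 : a ^ (m' + 1) + t * d
          = (∑ i ∈ Finset.range m', α (i + 1) * a ^ (i + 1)) + α 0 := by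
      -- from hαdigit and hA
        rw [← hαdigit, hA]
      linarith [hsumle]
    by_contra hcon
    push_neg at hcon
    rw [hXs0] at hmaster
    have hpow : a ^ (m' + 1) = a * a ^ m' := by rw [pow_succ]; ring
    rw [hpow] at hmaster
    zify at hmaster hts0 hcon ha
    have h1 : (a:ℤ) * (a:ℤ) ^ m' ≤ (a:ℤ) * ((t:ℤ) * (s 0)) :=
      mul_le_mul_of_nonneg_left hts0 (by linarith)
    have h2 : ((a:ℤ) - 1) * (α 0) ≤ ((a:ℤ) - 1) * ((t:ℤ) * d) :=
      mul_le_mul_of_nonneg_left hcon (by linarith)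
    linarith [hmaster, h1, h2]
  -- decomposition of s (m + r)
  have hdec : a ^ (m - 1) ≤ t * s 0 → ∀ k, m ≤ k → ∃ y ∈ M, ∃ z ∈ M, y ≠ 0 ∧ z ≠ 0 ∧ s k = y + z := by
    intro hts0 k hk
    have hα0' : t * d < α 0 := hα0 hts0
    obtain ⟨r, rfl⟩ := Nat.le.dest hk
    -- main identity: s (m + r) + t*d*s r = t*d*s 0 + ∑_{j<m} α j * s (j + r)
    have hEqA : (∑ j ∈ Finset.range m, α j * s (j + r)) + (1 + t * X) * d
        = a ^ r * (s m) + a ^ r * ((1 + t * X) * d) := by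
      have h2 : ∑ j ∈ Finset.range m, α j * (s (j + r) + d)
          = (∑ j ∈ Finset.range m, α j * s (j + r)) + (∑ j ∈ Finset.range m, α j) * d := by
        simp only [Nat.mul_add, Finset.sum_add_distrib, ← Finset.sum_mul]
      have h3 : ∑ j ∈ Finset.range m, α j * (s (j + r) + d)
          = a ^ r * ((∑ j ∈ Finset.range m, α j * s j) + (∑ j ∈ Finset.range m, α j) * d) := by
        have hp : ∀ i ∈ Finset.range m, α i * (s (i + r) + d)
            = a ^ r * (α i * s i) + a ^ r * (α i * d) := by
          intro i _
          have h1 : s (i + r) + d = a ^ r * (s i + d) := by rw [hsdX, hsdX, pow_add]; ring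
          rw [h1]; ring
        rw [Finset.sum_congr rfl hp, Finset.sum_add_distrib, ← Finset.mul_sum, ← Finset.mul_sum,
          ← Finset.sum_mul]
        ring
      have h4 : (∑ j ∈ Finset.range m, α j) = 1 + t * X := by rw [hαsum, hXdef]; ring
      rw [h4] at h2 h3
      rw [← hα] at h3
      calc (∑ j ∈ Finset.range m, α j * s (j + r)) + (1 + t * X) * d
          = ∑ j ∈ Finset.range m, α j * (s (j + r) + d) := by rw [h2]
      _ = a ^ r * (s m + (1 + t * X) * d) := h3
      _ = a ^ r * (s m) + a ^ r * ((1 + t * X) * d) := by ring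
    have hkey : s (m + r) + t * d * s r
        = t * d * s 0 + ∑ j ∈ Finset.range m, α j * s (j + r) := by
      have hF1 : s (m + r) + d = a ^ r * s m + a ^ r * d := by
        have : s (m + r) + d = a ^ r * (s m + d) := by rw [hsdX, hsdX, pow_add]; ring
        rw [this]; ring
      have hF2 : s r + d = a ^ r * s 0 + a ^ r * d := by
        have : s r + d = a ^ r * (s 0 + d) := by
          have := hsdX r
          rw [this, hsdX 0]; ring
        rw [this]; ring
      have hF3 : s 0 + d = X := hXs0.symm
      zify at hEqA hF1 hF2 hF3 ⊢
      linear_combination hF1 - hEqA + ((t:ℤ) * d) * hF2 + ((t:ℤ) * d * ((a:ℤ) ^ r - 1)) * hF3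
    -- split the sum
    obtain ⟨m', rfl⟩ : ∃ m', m = m' + 1 := ⟨m - 1, by omega⟩
    have hpeel : (∑ j ∈ Finset.range (m' + 1), α j * s (j + r))
        = (∑ i ∈ Finset.range m', α (i + 1) * s (i + 1 + r)) + α 0 * s r := by
      rw [Finset.sum_range_succ']
      simp
    set z := (t * d - 1) * s 0 + ((α 0 - t * d) * s r
        + ∑ i ∈ Finset.range m', α (i + 1) * s (i + 1 + r)) with hzdef
    have hzmem : z ∈ M := by
      refine AddSubmonoid.add_mem M (hmul_mem _ _) (AddSubmonoid.add_mem M (hmul_mem _ _) ?_)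
      exact AddSubmonoid.sum_mem M fun i _ => hmul_mem _ _
    have htd1 : 1 ≤ t * d := by
      have := Nat.mul_le_mul ht hd
      simpa using this
    have heq : s (m' + 1 + r) = s 0 + z := by
      have e1 : s 0 + (t * d - 1) * s 0 = t * d * s 0 := by
        calc s 0 + (t * d - 1) * s 0 = (1 + (t * d - 1)) * s 0 := by ring
        _ = t * d * s 0 := by rw [show 1 + (t * d - 1) = t * d by omega]
      have e2 : (α 0 - t * d) * s r + t * d * s r = α 0 * s r := by
        calc (α 0 - t * d) * s r + t * d * s r = ((α 0 - t * d) + t * d) * s r := by ring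
        _ = α 0 * s r := by rw [Nat.sub_add_cancel hα0'.le]
      have : s (m' + 1 + r) + t * d * s r = (s 0 + z) + t * d * s r := by
        rw [hkey, hpeel, hzdef]
        linarith [e1, e2]
      omega
    refine ⟨s 0, hgen 0, z, hzmem, (hspos 0).ne', ?_, heq⟩
    intro hz0
    have : s 0 < s (m' + 1 + r) := hsmono (by omega)
    rw [heq, hz0] at this
    omega
  -- atom analysis
  have hanalysis : ∀ j, j < m → ∀ y ∈ M, ∀ z ∈ M, y ≠ 0 → z ≠ 0 → s j = y + z →
      ∃ T, 1 ≤ T ∧ T * s 0 < a ^ (m - 1) ∧ (a - 1) ∣ T * s 0 := by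
    intro j hj y hy z hz hy0 hz0 hyz
    obtain ⟨K₁, β₁, hzero₁, hyrep⟩ := rep_of_mem_closure s hy
    obtain ⟨K₂, β₂, hzero₂, hzrep⟩ := rep_of_mem_closure s hz
    set K := max K₁ K₂ with hK
    obtain ⟨β, hβi⟩ : ∃ β : ℕ → ℕ, ∀ i, β i = β₁ i + β₂ i :=
      ⟨fun i => β₁ i + β₂ i, fun _ => rfl⟩
    have hvK : ∀ i, K ≤ i → β i = 0 := fun i hi => by
      rw [hβi, hzero₁ i (le_trans (le_max_left _ _) hi),
        hzero₂ i (le_trans (le_max_right _ _) hi)]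
    have hsplitβ : ∑ i ∈ Finset.range K, β i * s i
        = ∑ i ∈ Finset.range K, β₁ i * s i + ∑ i ∈ Finset.range K, β₂ i * s i := by
      rw [← Finset.sum_add_distrib]
      exact Finset.sum_congr rfl fun i _ => by rw [hβi]; exact add_mul _ _ _
    have hsumβ : ∑ i ∈ Finset.range K, β i * s i = s j := by
      rw [hsplitβ, ← hextm K₁ K β₁ s hzero₁ (le_max_left _ _),
        ← hextm K₂ K β₂ s hzero₂ (le_max_right _ _), ← hyrep, ← hzrep, hyz]
    have hpos_count : ∀ (Kq : ℕ) (γ : ℕ → ℕ) (w : ℕ),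
        w = ∑ i ∈ Finset.range Kq, γ i * s i → w ≠ 0 → 1 ≤ ∑ i ∈ Finset.range Kq, γ i := by
      intro Kq γ w hw hw0
      by_contra hcon
      push_neg at hcon
      have hg : ∀ i ∈ Finset.range Kq, γ i = 0 := Finset.sum_eq_zero_iff.mp (by omega)
      exact hw0 (by rw [hw]; exact Finset.sum_eq_zero fun i hi => by rw [hg i hi, zero_mul])
    have hN2 : 2 ≤ ∑ i ∈ Finset.range K, β i := by
      have c₁ := hpos_count K₁ β₁ y hyrep hy0
      have c₂ := hpos_count K₂ β₂ z hzrep hz0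
      have e₁ := hextc K₁ K β₁ hzero₁ (le_max_left _ _)
      have e₂ := hextc K₂ K β₂ hzero₂ (le_max_right _ _)
      have hsplitc : ∑ i ∈ Finset.range K, β i
          = ∑ i ∈ Finset.range K, β₁ i + ∑ i ∈ Finset.range K, β₂ i := by
        rw [← Finset.sum_add_distrib]
        exact Finset.sum_congr rfl fun i _ => hβi i
      omega
    have hvj : ∀ i, j ≤ i → β i = 0 := by
      intro i hji
      rcases Nat.lt_or_ge i K with hiK | hiK
      swap
      · exact hvK i hiK
      by_contra hne
      have hiR : i ∈ Finset.range K := Finset.mem_range.mpr hiK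
      have h1 : s i ≤ β i * s i := Nat.le_mul_of_pos_left _ (Nat.pos_of_ne_zero hne)
      have h2 : β i * s i ≤ s j := by
        rw [← hsumβ]
        exact Finset.single_le_sum (f := fun i => β i * s i) (fun i _ => Nat.zero_le _) hiR
      rcases Nat.lt_or_ge j i with h | h
      · have := hsmono h
        omega
      · have hij : i = j := by omega
        subst hij
        have h3 : ∑ i' ∈ (Finset.range K).erase i, β i' * s i' + β i * s i = s i := by
          rw [Finset.sum_erase_add _ _ hiR]
          exact hsumβ
        have h5 : β i * s i = s i := le_antisymm (by linarith) h1
        have h6 : β i = 1 := by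
          have h5' : β i * s i = 1 * s i := by rw [h5, one_mul]
          exact Nat.eq_of_mul_eq_mul_right (hspos i) h5'
        have h7 : ∑ i' ∈ (Finset.range K).erase i, β i' * s i' = 0 := by linarith
        have h9 : ∑ i' ∈ (Finset.range K).erase i, β i' + β i = ∑ i' ∈ Finset.range K, β i' :=
          Finset.sum_erase_add _ _ hiR
        have h10 : ∑ i' ∈ (Finset.range K).erase i, β i' ≠ 0 := by omega
        obtain ⟨i1, hi1, hbi1⟩ : ∃ i1 ∈ (Finset.range K).erase i, β i1 ≠ 0 := by
          by_contra hall
          push_neg at hall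
          exact h10 (Finset.sum_eq_zero hall)
        have h11 := Finset.sum_eq_zero_iff.mp h7 i1 hi1
        rcases Nat.mul_eq_zero.mp h11 with h' | h'
        · exact hbi1 h'
        · exact absurd h' (hspos i1).ne'
    have hrs : ∑ i ∈ Finset.range j, β i * s i = s j := by
      rcases le_total j K with h | h
      · rw [hextm j K β s hvj h]
        exact hsumβ
      · rw [← hextm K j β s hvK h]
        exact hsumβ
    have hrc : ∑ i ∈ Finset.range j, β i = ∑ i ∈ Finset.range K, β i := by
      rcases le_total j K with h | h
      · exact hextc j K β hvj h
      · exact (hextc K j β hvK h).symm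
    obtain ⟨T, hdig, hcnt⟩ := hdigit j β j hrs
    have hN2' : 2 ≤ ∑ i ∈ Finset.range j, β i := by omega
    have hT1 : 1 ≤ T := by
      rcases Nat.eq_zero_or_pos T with h | h
      · subst h
        simp at hcnt
        omega
      · exact h
    refine ⟨T, hT1, ?_, ?_⟩
    · have hNv : (∑ i ∈ Finset.range j, β i) * s 0 ≤ s j := by
        rw [← hrs, Finset.sum_mul]
        exact Finset.sum_le_sum fun i _ => Nat.mul_le_mul_left _ (hsmono.monotone (Nat.zero_le i))
      have hv1 : 1 * s 0 + X * (T * s 0) ≤ s j := by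
        have h1 : (∑ i ∈ Finset.range j, β i) * s 0 = 1 * s 0 + X * (T * s 0) := by
          rw [hcnt]; ring
        linarith
      have hv2 : X * a ^ j ≤ X * a ^ (m - 1) :=
        Nat.mul_le_mul_left X (Nat.pow_le_pow_right ha1 (by omega))
      have hv3 : X * (T * s 0) < X * a ^ (m - 1) := by
        have h2 := hsdX j
        linarith [hspos 0, hd]
      exact Nat.lt_of_mul_lt_mul_left hv3
    · have hAN : ((a : ℤ) - 1) ∣ ((∑ i ∈ Finset.range j, β i * a ^ i : ℕ) : ℤ)
          - ((∑ i ∈ Finset.range j, β i : ℕ) : ℤ) := by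
        push_cast
        rw [← Finset.sum_sub_distrib]
        refine Finset.dvd_sum fun i _ => ?_
        have h1 : ((a : ℤ) - 1) ∣ (a : ℤ) ^ i - 1 := by
          have := sub_dvd_pow_sub_pow (a : ℤ) 1 i
          simpa using this
        have h2 : (β i : ℤ) * (a : ℤ) ^ i - (β i : ℤ) = (β i : ℤ) * ((a : ℤ) ^ i - 1) := by ring
        rw [h2]
        exact Dvd.dvd.mul_left h1 _
      have hAj : ((a : ℤ) - 1) ∣ (a : ℤ) ^ j - 1 := by
        have := sub_dvd_pow_sub_pow (a : ℤ) 1 j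
        simpa using this
      have hfin : ((a : ℤ) - 1) ∣ (T : ℤ) * (s 0 : ℤ) := by
        have hdig' : ((∑ i ∈ Finset.range j, β i * a ^ i : ℕ) : ℤ) = (a : ℤ) ^ j + (T : ℤ) * d := by
          rw [hdig]; push_cast; ring
        have hcnt' : ((∑ i ∈ Finset.range j, β i : ℕ) : ℤ) = 1 + (T : ℤ) * ((s 0 : ℤ) + d) := by
          rw [hcnt]
          have : (X : ℤ) = (s 0 : ℤ) + (d : ℤ) := by exact_mod_cast hXs0
          push_cast
          rw [this]
        have key : (T : ℤ) * (s 0 : ℤ) = ((a : ℤ) ^ j - 1)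
            - (((∑ i ∈ Finset.range j, β i * a ^ i : ℕ) : ℤ)
              - ((∑ i ∈ Finset.range j, β i : ℕ) : ℤ)) := by
          rw [hdig', hcnt']; ring
        rw [key]
        exact dvd_sub hAj hAN
      have hfin2 : ((a - 1 : ℕ) : ℤ) ∣ ((T * s 0 : ℕ) : ℤ) := by
        rw [Nat.cast_sub ha1]
        push_cast
        exact hfin
      exact_mod_cast hfin2
  -- main combined lemma
  have hsplit : ∀ (K : ℕ) (β : ℕ → ℕ), 2 ≤ ∑ i ∈ Finset.range K, β i →
      ∃ y ∈ M, ∃ z ∈ M, y ≠ 0 ∧ z ≠ 0 ∧ (∑ i ∈ Finset.range K, β i * s i) = y + z := by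
    intro K β hN2
    obtain ⟨i0, hi0, hb0⟩ : ∃ i0 ∈ Finset.range K, β i0 ≠ 0 := by
      by_contra hall
      push_neg at hall
      rw [Finset.sum_eq_zero hall] at hN2
      omega
    have hsum1 : ∑ i ∈ (Finset.range K).erase i0, β i * s i + β i0 * s i0
        = ∑ i ∈ Finset.range K, β i * s i := Finset.sum_erase_add _ _ hi0
    have hsumc : ∑ i ∈ (Finset.range K).erase i0, β i + β i0
        = ∑ i ∈ Finset.range K, β i := Finset.sum_erase_add _ _ hi0
    refine ⟨s i0, hgen i0, (β i0 - 1) * s i0 + ∑ i ∈ (Finset.range K).erase i0, β i * s i,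
      ?_, (hspos i0).ne', ?_, ?_⟩
    · exact AddSubmonoid.add_mem M (hmul_mem _ _)
        (AddSubmonoid.sum_mem M fun i _ => hmul_mem _ _)
    · intro hz0
      obtain ⟨h1a, h1b⟩ := Nat.add_eq_zero.mp hz0
      have h2 : β i0 - 1 = 0 := by
        rcases Nat.mul_eq_zero.mp h1a with h' | h'
        · exact h'
        · exact absurd h' (hspos i0).ne'
      have h4 : ∑ i ∈ (Finset.range K).erase i0, β i = 0 := by
        refine Finset.sum_eq_zero fun i hi => ?_
        have := Finset.sum_eq_zero_iff.mp h1b i hi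
        rcases Nat.mul_eq_zero.mp this with h' | h'
        · exact h'
        · exact absurd h' (hspos i).ne'
      omega
    · have h5 : s i0 + (β i0 - 1) * s i0 = β i0 * s i0 := by
        have h6 : 1 + (β i0 - 1) = β i0 := by omega
        calc s i0 + (β i0 - 1) * s i0 = (1 + (β i0 - 1)) * s i0 := by ring
        _ = β i0 * s i0 := by rw [h6]
      linarith
  have hone : ∀ (K : ℕ) (β : ℕ → ℕ), (∑ i ∈ Finset.range K, β i) = 1 →
      ∃ i0, (∑ i ∈ Finset.range K, β i * s i) = s i0 := by
    intro K β hN1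
    obtain ⟨i0, hi0, hb0⟩ : ∃ i0 ∈ Finset.range K, β i0 ≠ 0 := by
      by_contra hall
      push_neg at hall
      rw [Finset.sum_eq_zero hall] at hN1
      omega
    have hsum1 : ∑ i ∈ (Finset.range K).erase i0, β i * s i + β i0 * s i0
        = ∑ i ∈ Finset.range K, β i * s i := Finset.sum_erase_add _ _ hi0
    have hsumc : ∑ i ∈ (Finset.range K).erase i0, β i + β i0
        = ∑ i ∈ Finset.range K, β i := Finset.sum_erase_add _ _ hi0
    have hb1 : β i0 = 1 := by omega
    have hrest : ∑ i ∈ (Finset.range K).erase i0, β i = 0 := by omega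
    have hrest2 : ∑ i ∈ (Finset.range K).erase i0, β i * s i = 0 := by
      refine Finset.sum_eq_zero fun i hi => ?_
      rw [Finset.sum_eq_zero_iff.mp hrest i hi, zero_mul]
    refine ⟨i0, ?_⟩
    rw [← hsum1, hrest2, hb1]
    ring
  have main : a ^ (m - 1) ≤ t * s 0 →
      (∀ T, 1 ≤ T → (a - 1) ∣ T * s 0 → a ^ (m - 1) ≤ T * s 0) → edim M = m := by
    intro hts0 hTb
    have hset : minGens M = ↑((Finset.range m).image s) := by
      ext x
      simp only [Finset.coe_image, Set.mem_image, Finset.mem_coe, Finset.mem_range,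
        minGens, Set.mem_setOf_eq]
      constructor
      · rintro ⟨hxM, hx0, hnd⟩
        obtain ⟨K, β, hzero, rfl⟩ := rep_of_mem_closure s hxM
        rcases Nat.lt_or_ge (∑ i ∈ Finset.range K, β i) 2 with hN | hN
        · rcases Nat.lt_or_ge (∑ i ∈ Finset.range K, β i) 1 with hN0 | hN1
          · exfalso
            apply hx0
            have hzc : ∑ i ∈ Finset.range K, β i = 0 := by omega
            refine Finset.sum_eq_zero fun i hi => ?_
            rw [Finset.sum_eq_zero_iff.mp hzc i hi, zero_mul]
          · obtain ⟨i0, hi0⟩ := hone K β (by omega)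
            refine ⟨i0, ?_, hi0.symm⟩
            by_contra hcon
            push_neg at hcon
            obtain ⟨y, hy, z, hz, hy0, hz0, hyz⟩ := hdec hts0 i0 hcon
            exact hnd ⟨y, hy, z, hz, hy0, hz0, hi0 ▸ hyz⟩
        · exfalso
          obtain ⟨y, hy, z, hz, hy0, hz0, hyz⟩ := hsplit K β hN
          exact hnd ⟨y, hy, z, hz, hy0, hz0, hyz⟩
      · rintro ⟨j, hj, rfl⟩
        refine ⟨hgen j, (hspos j).ne', ?_⟩
        rintro ⟨y, hy, z, hz, hy0, hz0, hyz⟩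
        obtain ⟨T, hT1, hT2, hT3⟩ := hanalysis j hj y hy z hz hy0 hz0 hyz
        exact absurd (hTb T hT1 hT3) (by omega)
    rw [edim, hset, Set.ncard_coe_finset,
      Finset.card_image_of_injective _ hsmono.injective, Finset.card_range]
  constructor
  · intro ht1 hs0
    refine main (by simpa [ht1] using hs0) (fun T hT _ => ?_)
    calc a ^ (m - 1) ≤ s 0 := hs0
    _ = 1 * s 0 := (one_mul _).symm
    _ ≤ T * s 0 := Nat.mul_le_mul_right _ hT
  · intro hta hs0
    -- basic facts about e
    have he_s0 : e ∣ s 0 := he1 _ (hgen 0)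
    have he_s1 : e ∣ s 1 := he1 _ (hgen 1)
    have he_s2 : e ∣ s 2 := he1 _ (hgen 2)
    have hs2eq : s 2 = a * s 1 + (a - 1) * d := by
      have h1 : s 2 + d = a * (s 1 + d) := by
        rw [hsdX 2, hsdX 1]; ring
      have h2 : (a - 1) * d + d = a * d := by
        rw [Nat.sub_one_mul]
        have : d ≤ a * d := Nat.le_mul_of_pos_left d (by omega)
        omega
      linarith
    have he_ad : e ∣ (a - 1) * d := by
      have h3 : e ∣ s 2 - a * s 1 := Nat.dvd_sub he_s2 (Dvd.dvd.mul_left he_s1 a)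
      have h4 : s 2 - a * s 1 = (a - 1) * d := by
        rw [hs2eq]
        exact Nat.add_sub_cancel_left _ _
      rwa [h4] at h3
    have hds0 : Nat.Coprime d (s 0) := by
      have h1 : Nat.Coprime d (s 0 + d) := by rw [← hXs0]; exact hcop
      exact Nat.coprime_add_self_right.mp h1
    have hcop_ed : Nat.Coprime e d := (Nat.Coprime.coprime_dvd_right he_s0 hds0).symm
    have he_a1 : e ∣ a - 1 := hcop_ed.dvd_of_dvd_mul_right he_ad
    have hg_all : ∀ x ∈ M, Nat.gcd (s 0) (a - 1) ∣ x := by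
      intro x hx
      induction hx using AddSubmonoid.closure_induction with
      | mem x hx =>
          obtain ⟨i, rfl⟩ := hx
          have h1 : s i + d = a ^ i * s 0 + a ^ i * d := by
            rw [hsdX i, hXs0]; ring
          have h2 : (a ^ i - 1) * d + d = a ^ i * d := by
            rw [Nat.sub_one_mul]
            have : d ≤ a ^ i * d := Nat.le_mul_of_pos_left d (by positivity)
            omega
          have hsi : s i = a ^ i * s 0 + (a ^ i - 1) * d := by linarith
          rw [hsi]
          refine Nat.dvd_add (Dvd.dvd.mul_left (Nat.gcd_dvd_left _ _) _) ?_
          refine Dvd.dvd.mul_right ?_ d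
          calc Nat.gcd (s 0) (a - 1) ∣ a - 1 := Nat.gcd_dvd_right _ _
          _ ∣ a ^ i - 1 := by
              have := Nat.sub_dvd_pow_sub_pow a 1 i
              simpa using this
      | zero => exact dvd_zero _
      | add x y hx hy ihx ihy => exact dvd_add ihx ihy
    have he_gcd : e = Nat.gcd (s 0) (a - 1) :=
      Nat.dvd_antisymm (Nat.dvd_gcd he_s0 he_a1) (he2 _ hg_all)
    have hepos : 0 < e := by
      rw [he_gcd]
      exact Nat.gcd_pos_of_pos_left _ (hspos 0)
    have hue : e * ((a - 1) / e) = a - 1 := Nat.mul_div_cancel' he_a1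
    have hv : e * (s 0 / e) = s 0 := Nat.mul_div_cancel' he_s0
    have hts0' : a ^ (m - 1) ≤ t * s 0 := by
      have h1 : (a - 1) / e ≤ t := by
        rw [hta]
        calc (a - 1) / e ≤ e * ((a - 1) / e) := Nat.le_mul_of_pos_left _ hepos
        _ = a - 1 := hue
      calc a ^ (m - 1) ≤ (a - 1) / e * s 0 := hs0
      _ ≤ t * s 0 := Nat.mul_le_mul_right _ h1
    refine main hts0' (fun T hT hdvd => ?_)
    have hcuv : Nat.Coprime (s 0 / e) ((a - 1) / e) := by
      have := Nat.coprime_div_gcd_div_gcd (m := s 0) (n := a - 1)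
        (Nat.gcd_pos_of_pos_left _ (hspos 0))
      rwa [← he_gcd] at this
    have huT : (a - 1) / e ∣ T := by
      rw [← hue, ← hv] at hdvd
      obtain ⟨w, hw⟩ := hdvd
      have h2 : (a - 1) / e ∣ T * (s 0 / e) := by
        refine ⟨w, ?_⟩
        have h3 : e * (T * (s 0 / e)) = e * ((a - 1) / e * w) := by
          calc e * (T * (s 0 / e)) = T * (e * (s 0 / e)) := by ring
          _ = e * ((a - 1) / e) * w := hw
          _ = e * ((a - 1) / e * w) := by ring
        exact Nat.eq_of_mul_eq_mul_left hepos h3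
      exact (Nat.Coprime.dvd_of_dvd_mul_right (Nat.Coprime.symm hcuv) h2)
    have hle : (a - 1) / e ≤ T := Nat.le_of_dvd (by omega) huT
    calc a ^ (m - 1) ≤ (a - 1) / e * s 0 := hs0
    _ ≤ T * s 0 := Nat.mul_le_mul_right _ hle
end

section
/- Let a = 2. If d ≤ 2^n and k is the smallest nonnegative integer such that c ≤ 2^k, then e(S_n) = n + k. -/
private lemma sum_map_pow_map_succ (l : List ℕ) :
    ((l.map (· + 1)).map (2 ^ ·)).sum = 2 * (l.map (2 ^ ·)).sum := by
  induction l with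
  | nil => simp
  | cons a l ih =>
    simp only [List.map_cons, List.sum_cons]
    rw [ih, pow_succ]; ring

private lemma exists_pow_list (d : ℕ) :
    ∃ l : List ℕ, (l.map (2 ^ ·)).sum = d ∧ l.length ≤ d := by
  induction d using Nat.strong_induction_on with
  | _ d ih =>
    rcases Nat.eq_zero_or_pos d with h | h
    · exact ⟨[], by simp [h], by simp [h]⟩
    · obtain ⟨l, hsum, hlen⟩ := ih (d / 2) (Nat.div_lt_self h one_lt_two)
      rcases Nat.even_or_odd d with he | ho
      · have h2 : d % 2 = 0 := Nat.even_iff.mp he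
        refine ⟨l.map (· + 1), ?_, ?_⟩
        · rw [sum_map_pow_map_succ, hsum]; omega
        · simp only [List.length_map]; omega
      · have h2 : d % 2 = 1 := Nat.odd_iff.mp ho
        refine ⟨0 :: l.map (· + 1), ?_, ?_⟩
        · simp only [List.map_cons, List.sum_cons, sum_map_pow_map_succ, hsum, pow_zero]
          omega
        · simp only [List.length_cons, List.length_map]; omega

private lemma sum_all_zero {l : List ℕ} (h : ∀ e ∈ l, e = 0) :
    (l.map (2 ^ ·)).sum = l.length := by
  induction l with
  | nil => simp
  | cons a l ih =>
    have ha := h a List.mem_cons_self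
    simp [ha, ih (fun e he => h e (List.mem_cons_of_mem _ he))]
    omega

private lemma extend_pow_list (V : ℕ) : ∀ (j : ℕ) (l : List ℕ),
    (l.map (2 ^ ·)).sum = V → l.length + j ≤ V →
    ∃ l' : List ℕ, l'.length = l.length + j ∧ (l'.map (2 ^ ·)).sum = V := by
  intro j
  induction j with
  | zero => intro l h _; exact ⟨l, by simp, h⟩
  | succ j ih =>
    intro l hsum hlen
    by_cases hall : ∀ e ∈ l, e = 0
    · have := sum_all_zero hall
      omega
    · push_neg at hall
      obtain ⟨e, hel, he0⟩ := hall
      obtain ⟨l₁, l₂, rfl⟩ := List.append_of_mem hel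
      have h2e : 2 ^ (e - 1) + 2 ^ (e - 1) = 2 ^ e := by
        have he : e - 1 + 1 = e := Nat.succ_pred_eq_of_pos (Nat.pos_of_ne_zero he0)
        conv_rhs => rw [← he, pow_succ]
        ring
      have hsum'' : (((e - 1) :: (e - 1) :: (l₁ ++ l₂)).map (2 ^ ·)).sum = V := by
        simp only [List.map_cons, List.sum_cons, List.map_append, List.sum_append] at hsum ⊢
        omega
      have hlen'' : ((e - 1) :: (e - 1) :: (l₁ ++ l₂)).length = (l₁ ++ e :: l₂).length + 1 := by
        simp only [List.length_cons, List.length_append]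
        omega
      obtain ⟨l', hl1, hl2⟩ := ih ((e - 1) :: (e - 1) :: (l₁ ++ l₂)) hsum'' (by omega)
      exact ⟨l', by omega, hl2⟩

private lemma exists_exact_pow_list (V p : ℕ)
    (h1 : ∃ l : List ℕ, (l.map (2 ^ ·)).sum = V ∧ l.length ≤ p) (h2 : p ≤ V) :
    ∃ l : List ℕ, l.length = p ∧ (l.map (2 ^ ·)).sum = V := by
  obtain ⟨l, hsl, hll⟩ := h1
  obtain ⟨l', h1', h2'⟩ := extend_pow_list V (p - l.length) l hsl (by omega)
  exact ⟨l', by omega, h2'⟩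



set_option maxHeartbeats 1000000

/-- case `a = 2`: if `d ≤ 2^n` and `k` is the smallest
nonnegative integer such that `c ≤ 2^k`, then `e(S_n) = n + k`. -/
theorem stmt_13 (c d n : ℕ) (hc : 0 < c) (hd : 0 < d) (hdca : d < 2 * c)
    (hdodd : Odd d) (hdc : Nat.Coprime d c) (hn : 0 < n)
    (s : ℕ → ℕ) (hs : ∀ j, s j = c * 2 ^ (n + j) - d)
    (hdn : d ≤ 2 ^ n)
    (k : ℕ) (hk : c ≤ 2 ^ k) (hkmin : ∀ k' : ℕ, c ≤ 2 ^ k' → k ≤ k') :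
    edim (AddSubmonoid.closure (Set.range s)) = n + k := by
  set M := AddSubmonoid.closure (Set.range s) with hM
  -- basic facts
  have h2nj : ∀ j : ℕ, 2 * c ≤ c * 2 ^ (n + j) := by
    intro j
    have : (2:ℕ) ≤ 2 ^ (n + j) := by
      calc (2:ℕ) = 2 ^ 1 := (pow_one 2).symm
        _ ≤ 2 ^ (n + j) := Nat.pow_le_pow_right (by norm_num) (by omega)
    calc 2 * c = c * 2 := by ring
      _ ≤ c * 2 ^ (n + j) := Nat.mul_le_mul_left c this
  have hsd : ∀ j, s j + d = c * 2 ^ (n + j) := by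
    intro j
    rw [hs j]
    exact Nat.sub_add_cancel (by have := h2nj j; omega)
  have hspos : ∀ j, 0 < s j := by
    intro j
    have h1 := hsd j
    have h2 := h2nj j
    omega
  have hsinj : Function.Injective s := by
    intro a b hab
    have : c * 2 ^ (n + a) = c * 2 ^ (n + b) := by rw [← hsd a, ← hsd b, hab]
    have h2 : (2:ℕ) ^ (n + a) = 2 ^ (n + b) := Nat.eq_of_mul_eq_mul_left hc this
    have := Nat.pow_right_injective (le_refl 2) h2
    omega
  -- list sum identity
  have sumL : ∀ L : List ℕ, (L.map s).sum + L.length * d = c * 2 ^ n * (L.map (2 ^ ·)).sum := by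
    intro L
    induction L with
    | nil => simp
    | cons j L ih =>
      simp only [List.map_cons, List.sum_cons, List.length_cons]
      calc s j + (L.map s).sum + (L.length + 1) * d
          = (s j + d) + ((L.map s).sum + L.length * d) := by ring
        _ = c * 2 ^ (n + j) + c * 2 ^ n * (L.map (2 ^ ·)).sum := by rw [hsd j, ih]
        _ = c * 2 ^ n * (2 ^ j + (L.map (2 ^ ·)).sum) := by rw [pow_add]; ring
  -- membership characterisation
  have memM : ∀ x : ℕ, x ∈ M ↔ ∃ L : List ℕ, (L.map s).sum = x := by
    intro x
    constructor
    · intro hx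
      obtain ⟨l, hl1, hl2⟩ := AddSubmonoid.exists_list_of_mem_closure hx
      have : ∀ l : List ℕ, (∀ y ∈ l, y ∈ Set.range s) → ∃ L : List ℕ, L.map s = l := by
        intro l
        induction l with
        | nil => intro _; exact ⟨[], rfl⟩
        | cons a l ih =>
          intro h
          obtain ⟨j, hj⟩ := h a List.mem_cons_self
          obtain ⟨L, hL⟩ := ih fun y hy => h y (List.mem_cons_of_mem _ hy)
          exact ⟨j :: L, by simp [hj, hL]⟩
      obtain ⟨L, hL⟩ := this l hl1
      exact ⟨L, by rw [hL, hl2]⟩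
    · rintro ⟨L, rfl⟩
      exact AddSubmonoid.list_sum_mem M (by
        intro y hy
        simp only [List.mem_map] at hy
        obtain ⟨j, _, rfl⟩ := hy
        exact AddSubmonoid.subset_closure ⟨j, rfl⟩)
  -- key inequality for small t
  have keyle : ∀ t, t < n + k → 2 ^ t + d ≤ c * 2 ^ n := by
    intro t ht
    rcases Nat.eq_zero_or_pos k with hk0 | hkpos
    · subst hk0
      have hc1 : c = 1 := by simpa using le_antisymm (by simpa using hk) hc
      have hd1 : d = 1 := by omega
      have h2t : 2 ^ t * 2 ≤ 2 ^ n := by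
        rw [← pow_succ]
        exact Nat.pow_le_pow_right (by norm_num) (by omega)
      have : (1:ℕ) ≤ 2 ^ t := Nat.one_le_two_pow
      subst hc1; subst hd1; omega
    · obtain ⟨k', rfl⟩ : ∃ k', k = k' + 1 := ⟨k - 1, by omega⟩
      have hck' : 2 ^ k' < c := by
        by_contra h
        have := hkmin k' (by omega)
        omega
      calc 2 ^ t + d ≤ 2 ^ (n + k') + 2 ^ n :=
            add_le_add (Nat.pow_le_pow_right (by norm_num) (by omega)) hdn
        _ = (2 ^ k' + 1) * 2 ^ n := by rw [add_mul, one_mul, pow_add]; ring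
        _ ≤ c * 2 ^ n := Nat.mul_le_mul_right _ (by omega)
  -- coprimality
  have hcop : Nat.Coprime d (c * 2 ^ n) :=
    Nat.Coprime.mul_right hdc ((Nat.coprime_two_right.mpr hdodd).pow_right n)
  -- large t: s t is a sum of two nonzero elements of M
  have hbig : ∀ t, n + k ≤ t →
      ∃ y ∈ M, ∃ z ∈ M, y ≠ 0 ∧ z ≠ 0 ∧ s t = y + z := by
    intro t ht
    have h2kt : c * 2 ^ n ≤ 2 ^ t := by
      calc c * 2 ^ n ≤ 2 ^ k * 2 ^ n := Nat.mul_le_mul_right _ hk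
        _ = 2 ^ (n + k) := by rw [← pow_add]; ring_nf
        _ ≤ 2 ^ t := Nat.pow_le_pow_right (by norm_num) ht
    obtain ⟨ld, hld1, hld2⟩ := exists_pow_list d
    obtain ⟨l, hl1, hl2⟩ := exists_exact_pow_list (2 ^ t + d) (c * 2 ^ n + 1)
      ⟨t :: ld, by simp [hld1], by
        simp only [List.length_cons]
        have : (1:ℕ) * 2 ^ n ≤ c * 2 ^ n := Nat.mul_le_mul_right _ hc
        omega⟩ (by omega)
    -- (l.map s).sum = s t
    have hsum : (l.map s).sum = s t := by
      have h1 := sumL l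
      rw [hl1, hl2] at h1
      have h2 : c * 2 ^ n * (2 ^ t + d) = s t + (c * 2 ^ n + 1) * d := by
        have h3 : c * 2 ^ n * 2 ^ t = s t + d := by rw [hsd t, pow_add]; ring
        calc c * 2 ^ n * (2 ^ t + d) = c * 2 ^ n * 2 ^ t + c * 2 ^ n * d := by ring
          _ = s t + d + c * 2 ^ n * d := by rw [h3]
          _ = s t + (c * 2 ^ n + 1) * d := by ring
      omega
    -- split l
    have hcn : 0 < c * 2 ^ n := Nat.mul_pos hc (Nat.pow_pos (by norm_num))
    obtain ⟨j, rest, rfl⟩ : ∃ j rest, l = j :: rest := by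
      cases l with
      | nil => rw [List.length_nil] at hl1; omega
      | cons j rest => exact ⟨j, rest, rfl⟩
    obtain ⟨j', rest', rfl⟩ : ∃ j' rest', rest = j' :: rest' := by
      cases rest with
      | nil => rw [List.length_cons, List.length_nil] at hl1; omega
      | cons j' rest' => exact ⟨j', rest', rfl⟩
    refine ⟨s j, (memM _).mpr ⟨[j], by simp⟩,
      ((j' :: rest').map s).sum, (memM _).mpr ⟨j' :: rest', rfl⟩, ?_, ?_, ?_⟩
    · exact (hspos j).ne'
    · simp only [List.map_cons, List.sum_cons]
      have := hspos j'
      omega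
    · simp only [List.map_cons, List.sum_cons] at hsum ⊢
      omega
  -- small t: s t is not a sum of two nonzero elements of M
  have hsmall : ∀ t, t < n + k →
      ¬∃ y ∈ M, ∃ z ∈ M, y ≠ 0 ∧ z ≠ 0 ∧ s t = y + z := by
    intro t ht
    rintro ⟨y, hy, z, hz, hy0, hz0, hyz⟩
    obtain ⟨Ly, hLy⟩ := (memM y).mp hy
    obtain ⟨Lz, hLz⟩ := (memM z).mp hz
    have hLyne : Ly ≠ [] := by rintro rfl; simp at hLy; omega
    have hLzne : Lz ≠ [] := by rintro rfl; simp at hLz; omega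
    set L := Ly ++ Lz with hL
    have hLsum : (L.map s).sum = s t := by
      simp only [hL, List.map_append, List.sum_append, hLy, hLz]
      omega
    have hLlen : 2 ≤ L.length := by
      simp only [hL, List.length_append]
      have := List.length_pos_iff.mpr hLyne
      have := List.length_pos_iff.mpr hLzne
      omega
    set m := L.length with hm
    set T := (L.map (2 ^ ·)).sum with hT
    have h1 : (L.map s).sum + m * d = c * 2 ^ n * T := sumL L
    rw [hLsum] at h1
    have h2 : s t + d = c * 2 ^ n * 2 ^ t := by rw [hsd t, pow_add]; ring
    have hcn : 0 < c * 2 ^ n := Nat.mul_pos hc (Nat.pow_pos (by norm_num))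
    -- T ≥ 2^t, and (m-1)*d = c*2^n*(T - 2^t)
    have hTge : 2 ^ t ≤ T := by
      by_contra h
      push_neg at h
      have : c * 2 ^ n * T < c * 2 ^ n * 2 ^ t := Nat.mul_lt_mul_of_pos_left h hcn
      have : d ≤ m * d := Nat.le_mul_of_pos_left d (by omega)
      omega
    obtain ⟨u, hu⟩ : ∃ u, T = 2 ^ t + u := ⟨T - 2 ^ t, by omega⟩
    have e1 : c * 2 ^ n * T = c * 2 ^ n * 2 ^ t + c * 2 ^ n * u := by rw [hu]; ring
    have h3 : (m - 1) * d = c * 2 ^ n * u := by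
      rw [Nat.sub_mul, one_mul]
      omega
    have hdvd : c * 2 ^ n ∣ m - 1 := by
      have : c * 2 ^ n ∣ (m - 1) * d := ⟨u, by rw [h3]⟩
      exact Nat.Coprime.dvd_of_dvd_mul_right (Nat.Coprime.symm hcop) this
    obtain ⟨r, hr⟩ := hdvd
    have hr1 : 1 ≤ r := by
      rcases Nat.eq_zero_or_pos r with h | h
      · subst h; simp at hr; omega
      · exact h
    -- T = 2^t + r * d
    have hTval : T = 2 ^ t + r * d := by
      have e2 : c * 2 ^ n * (r * d) = c * 2 ^ n * u := by
        rw [← h3, hr]; ring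
      have := Nat.eq_of_mul_eq_mul_left hcn e2
      omega
    -- T ≥ m (each power of two is ≥ 1)
    have hTm : m ≤ T := by
      rw [hm, hT]
      calc L.length = (L.map (2 ^ ·)).length := (List.length_map _).symm
        _ ≤ (L.map (2 ^ ·)).sum := by
            apply List.length_le_sum_of_one_le
            intro x hx
            simp only [List.mem_map] at hx
            obtain ⟨e, _, rfl⟩ := hx
            exact Nat.one_le_two_pow
    -- contradiction
    have hkey := keyle t ht
    have hm1 : m = c * 2 ^ n * r + 1 := by omega
    have hrt : 2 ^ t ≤ r * 2 ^ t := Nat.le_mul_of_pos_left _ (by omega)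
    have : 2 ^ t + r * d ≤ c * 2 ^ n * r := by
      calc 2 ^ t + r * d ≤ r * 2 ^ t + r * d := by omega
        _ = r * (2 ^ t + d) := by ring
        _ ≤ r * (c * 2 ^ n) := Nat.mul_le_mul (le_refl r) hkey
        _ = c * 2 ^ n * r := by ring
    omega
  -- minGens = s '' [0, n+k)
  have hmg : minGens M = ↑((Finset.range (n + k)).image s) := by
    ext x
    simp only [minGens, Set.mem_setOf_eq, Finset.coe_image, Set.mem_image,
      Finset.mem_coe, Finset.mem_range]
    constructor
    · rintro ⟨hxM, hx0, hxind⟩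
      obtain ⟨L, hL⟩ := (memM x).mp hxM
      obtain ⟨j, rfl⟩ : ∃ j, L = [j] := by
        cases L with
        | nil => simp at hL; omega
        | cons j rest =>
          cases rest with
          | nil => exact ⟨j, rfl⟩
          | cons j' rest' =>
            exfalso
            apply hxind
            refine ⟨s j, (memM _).mpr ⟨[j], by simp⟩,
              ((j' :: rest').map s).sum, (memM _).mpr ⟨j' :: rest', rfl⟩,
              (hspos j).ne', ?_, ?_⟩
            · simp only [List.map_cons, List.sum_cons]
              have := hspos j'
              omega
            · simp only [List.map_cons, List.sum_cons] at hL ⊢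
              omega
      simp only [List.map_cons, List.map_nil, List.sum_cons, List.sum_nil, add_zero] at hL
      refine ⟨j, ?_, hL⟩
      by_contra h
      exact hxind (hL ▸ hbig j (by omega))
    · rintro ⟨j, hj, rfl⟩
      exact ⟨(memM _).mpr ⟨[j], by simp⟩, (hspos j).ne', hsmall j hj⟩
  rw [edim, hmg, Set.ncard_coe_finset,
    Finset.card_image_of_injective _ hsinj, Finset.card_range]
end

section
/- Let m = e(S_n) and assume m ≥ 2. If x ∈ Ap(S_n, s_0), then there exists a residual (m−1)-tuple (α_1, …, α_{m−1}) such that x = α_1·s_1 + ⋯ + α_{m−1}·s_{m−1}. -/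
/-- The Apéry set of `x` in `S`: the elements of `S` that cannot be written as
`x + s` with `s ∈ S`. -/
def apery (S : AddSubmonoid ℕ) (x : ℕ) : Set ℕ :=
  {m | m ∈ S ∧ ¬∃ s ∈ S, m = x + s}

/-- A residual `r`-tuple `(α_1, …, α_r)` (here `α i` encodes `α_{i+1}`):
`0 ≤ α_i ≤ a` for all `i`, and if `α_i = a` for some `i ∈ {2, …, r}`, then
`α_j = 0` for all `j < i`. -/
def IsResidual (a : ℕ) {r : ℕ} (α : Fin r → ℕ) : Prop :=
  (∀ i, α i ≤ a) ∧ ∀ i j : Fin r, α i = a → 1 ≤ (i : ℕ) → j < i → α j = 0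

/- ------------------- auxiliary lemmas ------------------- -/

lemma aux_dec {R : Set ℕ} {x : ℕ} (hx : x ∈ AddSubmonoid.closure R) :
    x ≠ 0 → ∃ g ∈ R, ∃ w ∈ AddSubmonoid.closure R, x = g + w := by
  refine AddSubmonoid.closure_induction ?_ ?_ ?_ hx
  · exact fun y hy _ => ⟨y, hy, 0, zero_mem _, (add_zero y).symm⟩
  · exact fun h => absurd rfl h
  · rintro y z hy hz ihy ihz h0
    rcases Nat.eq_zero_or_pos y with rfl | hy0
    · rcases Nat.eq_zero_or_pos z with rfl | hz0
      · omega
      · obtain ⟨g, hg, w, hw, rfl⟩ := ihz hz0.ne'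
        exact ⟨g, hg, w, hw, by omega⟩
    · obtain ⟨g, hg, w, hw, rfl⟩ := ihy hy0.ne'
      exact ⟨g, hg, w + z, add_mem hw hz, by omega⟩

lemma sum_ite_coef (F : Finset ℕ) (u cu : ℕ) (f : ℕ → ℕ) (hu : u ∈ F) :
    ∑ t ∈ F, (if t = u then cu else 0) * f t = cu * f u := by
  have h : ∀ t ∈ F, (if t = u then cu else 0) * f t = if t = u then cu * f u else 0 := by
    intro t _
    by_cases h : t = u
    · subst h; simp
    · simp [h]
  rw [Finset.sum_congr rfl h, Finset.sum_ite_eq' F u (fun _ => cu * f u), if_pos hu]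

lemma sum_decomp1 (F : Finset ℕ) (δ : ℕ → ℕ) (u cu : ℕ) (f : ℕ → ℕ) (hu : u ∈ F) :
    ∑ t ∈ F, (δ t + (if t = u then cu else 0)) * f t
      = (∑ t ∈ F, δ t * f t) + cu * f u := by
  simp only [add_mul]
  rw [Finset.sum_add_distrib, sum_ite_coef F u cu f hu]

lemma sum_decomp2 (F : Finset ℕ) (δ : ℕ → ℕ) (u cu v cv : ℕ) (f : ℕ → ℕ)
    (hu : u ∈ F) (hv : v ∈ F) :
    ∑ t ∈ F, (δ t + (if t = u then cu else 0) + (if t = v then cv else 0)) * f t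
      = (∑ t ∈ F, δ t * f t) + cu * f u + cv * f v := by
  simp only [add_mul]
  rw [Finset.sum_add_distrib, Finset.sum_add_distrib, sum_ite_coef F u cu f hu,
    sum_ite_coef F v cv f hv]

lemma aux_rep (s : ℕ → ℕ) (k : ℕ) {x : ℕ}
    (hx : x ∈ AddSubmonoid.closure (s '' Set.Iio k)) :
    ∃ β : ℕ → ℕ, x = ∑ i ∈ Finset.range k, β i * s i := by
  refine AddSubmonoid.closure_induction ?_ ?_ ?_ hx
  · rintro y ⟨i, hi, rfl⟩
    refine ⟨fun t => if t = i then 1 else 0, ?_⟩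
    rw [sum_ite_coef _ i 1 s (Finset.mem_range.mpr hi), one_mul]
  · exact ⟨0, by simp⟩
  · rintro y z hy hz ⟨β, rfl⟩ ⟨γ, rfl⟩
    refine ⟨β + γ, ?_⟩
    rw [← Finset.sum_add_distrib]
    exact Finset.sum_congr rfl fun t _ => by simp [add_mul]

lemma Ico_sum_eq_fin_sum (f : ℕ → ℕ) (m : ℕ) :
    ∑ t ∈ Finset.Ico 1 m, f t = ∑ i : Fin (m - 1), f ((i : ℕ) + 1) := by
  rw [Finset.sum_Ico_eq_sum_range,
    Fin.sum_univ_eq_sum_range (fun k => f (k + 1)) (m - 1)]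
  exact Finset.sum_congr rfl fun i _ => by
    show f (1 + i) = f (i + 1); rw [Nat.add_comm]

lemma meas_lt {x c c' D D' Cm : ℕ} (h1 : c + 1 ≤ c') (h2 : c' ≤ x) (h3 : D' ≤ Cm) :
    (x - c') * (Cm + 1) + D' < (x - c) * (Cm + 1) + D := by
  have h4 : x - c' + 1 ≤ x - c := by omega
  calc (x - c') * (Cm + 1) + D'
      < (x - c') * (Cm + 1) + (Cm + 1) := Nat.add_lt_add_left (by omega) _
    _ = (x - c' + 1) * (Cm + 1) := by ring
    _ ≤ (x - c) * (Cm + 1) := Nat.mul_le_mul_right _ h4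
    _ ≤ (x - c) * (Cm + 1) + D := Nat.le_add_right _ _

/- ------------------- the theorem ------------------- -/

/-- let `m = e(S_n)` with `m ≥ 2`. If `x ∈ Ap(S_n, s_0)`, then
there exists a residual `(m−1)`-tuple `(α_1, …, α_{m−1})` with
`x = α_1·s_1 + ⋯ + α_{m−1}·s_{m−1}`. -/
theorem stmt_14 (a c d n : ℕ) (ha : 2 ≤ a) (hc : 0 < c) (hd : 0 < d)
    (hdca : d < c * a) (hda : Nat.Coprime d a) (hdc : Nat.Coprime d c) (hn : 0 < n)
    (s : ℕ → ℕ) (hs : ∀ j, s j = c * a ^ (n + j) - d)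
    (m : ℕ) (hm2 : 2 ≤ m)
    (hm : edim (AddSubmonoid.closure (Set.range s)) = m)
    (x : ℕ) (hx : x ∈ apery (AddSubmonoid.closure (Set.range s)) (s 0)) :
    ∃ α : Fin (m - 1) → ℕ, IsResidual a α ∧
      x = ∑ i : Fin (m - 1), α i * s ((i : ℕ) + 1) := by
  classical
  set S := AddSubmonoid.closure (Set.range s) with hSdef
  -- basic facts about s
  have hca : ∀ j, d < c * a ^ (n + j) := by
    intro j
    have h1 : a ≤ a ^ (n + j) := Nat.le_self_pow (by omega) a
    calc d < c * a := hdca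
      _ ≤ c * a ^ (n + j) := Nat.mul_le_mul_left c h1
  have hsd : ∀ j, s j + d = c * a ^ (n + j) := fun j => by
    rw [hs j, Nat.sub_add_cancel (hca j).le]
  have hspos : ∀ j, 0 < s j := fun j => by
    have h1 := hca j; have h2 := hsd j; omega
  have hsmono : StrictMono s := by
    apply strictMono_nat_of_lt_succ
    intro j
    have h1 := hsd j; have h2 := hsd (j + 1)
    have h3 : c * a ^ (n + j) < c * a ^ (n + (j + 1)) := by
      have hp : a ^ (n + j) < a ^ (n + (j + 1)) :=
        Nat.pow_lt_pow_right (by omega) (by omega)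
      exact mul_lt_mul_of_pos_left hp hc
    omega
  have hstep : ∀ j, s (j + 1) = a * s j + (a * d - d) := by
    intro j
    have h1 := hsd j
    have h2 := hsd (j + 1)
    have h3 : c * a ^ (n + (j + 1)) = a * (c * a ^ (n + j)) := by
      rw [show n + (j + 1) = (n + j) + 1 from rfl, pow_succ]; ring
    have had : d ≤ a * d := Nat.le_mul_of_pos_left d (by omega)
    have h4 : s (j + 1) + d = a * s j + a * d := by
      rw [h2, h3, ← h1, mul_add]
    generalize hY : a * d = Y at h4 had ⊢
    generalize hX : a * s j = X at h4 ⊢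
    omega
  have htrade : ∀ u v, 1 ≤ v → a * s u + s v = s (u + 1) + a * s (v - 1) := by
    intro u v hv
    obtain ⟨w, rfl⟩ : ∃ w, v = w + 1 := ⟨v - 1, by omega⟩
    simp only [Nat.add_sub_cancel]
    rw [hstep u, hstep w]
    generalize a * d - d = X
    ring
  -- submonoid helpers
  have hTmono : ∀ {i j : ℕ}, i ≤ j →
      AddSubmonoid.closure (s '' Set.Iio i) ≤ AddSubmonoid.closure (s '' Set.Iio j) :=
    fun h => AddSubmonoid.closure_mono (Set.image_mono (Set.Iio_subset_Iio h))
  have hTS : ∀ j, AddSubmonoid.closure (s '' Set.Iio j) ≤ S := fun j =>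
    AddSubmonoid.closure_mono (by rintro y ⟨i, -, rfl⟩; exact ⟨i, rfl⟩)
  have hsS : ∀ j, s j ∈ S := fun j => AddSubmonoid.subset_closure ⟨j, rfl⟩
  have hsT : ∀ i j, i < j → s i ∈ AddSubmonoid.closure (s '' Set.Iio j) :=
    fun i j h => AddSubmonoid.subset_closure ⟨i, h, rfl⟩
  have hcontr : ∀ w, w ∈ S → x = s 0 + w → False := fun w hw he => hx.2 ⟨w, hw, he⟩
  -- the membership ladder
  have hPstep : ∀ j, s j ∈ AddSubmonoid.closure (s '' Set.Iio j) →
      s (j + 1) ∈ AddSubmonoid.closure (s '' Set.Iio (j + 1)) := by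
    intro j hj
    obtain ⟨g, hg, w, hw, hdec⟩ := aux_dec hj (hspos j).ne'
    obtain ⟨i, hi, rfl⟩ := hg
    have hkey : s (j + 1) = s (i + 1) + a * w := by
      rw [hstep j, hdec, mul_add, hstep i]
      generalize a * d - d = X
      ring
    rw [hkey]
    refine add_mem (hsT (i + 1) (j + 1) (Nat.succ_lt_succ hi)) ?_
    have hw' : w ∈ AddSubmonoid.closure (s '' Set.Iio (j + 1)) := hTmono (Nat.le_succ j) hw
    simpa using (AddSubmonoid.closure (s '' Set.Iio (j + 1))).nsmul_mem hw' a
  have hbound : ∀ y, y ∈ S → ∃ k, y ∈ AddSubmonoid.closure (s '' Set.Iio k) := by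
    intro y hy
    refine AddSubmonoid.closure_induction ?_ ?_ ?_ hy
    · rintro z ⟨i, rfl⟩; exact ⟨i + 1, hsT i (i + 1) (Nat.lt_succ_self i)⟩
    · exact ⟨0, zero_mem _⟩
    · rintro y z hy hz ⟨k1, h1⟩ ⟨k2, h2⟩
      exact ⟨max k1 k2, add_mem (hTmono (le_max_left _ _) h1) (hTmono (le_max_right _ _) h2)⟩
  have hsmall : ∀ y, y ∈ S → ∀ j, y < s j →
      y ∈ AddSubmonoid.closure (s '' Set.Iio j) := by
    intro y hy j hyj
    obtain ⟨k, hk⟩ := hbound y hy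
    obtain ⟨β, hβ⟩ := aux_rep s k hk
    rw [hβ]
    refine AddSubmonoid.sum_mem _ fun i hi => ?_
    by_cases hij : i < j
    · have h0 : s i ∈ AddSubmonoid.closure (s '' Set.Iio j) := hsT i j hij
      simpa using (AddSubmonoid.closure (s '' Set.Iio j)).nsmul_mem h0 (β i)
    · have h1 : β i * s i ≤ y := by
        rw [hβ]
        exact Finset.single_le_sum (f := fun t => β t * s t) (fun t _ => Nat.zero_le _) hi
      have h2 : s j ≤ s i := hsmono.le_iff_le.mpr (by omega)
      have h3 : β i = 0 := by
        by_contra h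
        have h4 : s i ≤ β i * s i := Nat.le_mul_of_pos_left (s i) (by omega)
        exact absurd (lt_of_le_of_lt (h2.trans (h4.trans h1)) hyj) (lt_irrefl _)
      rw [h3, zero_mul]
      exact zero_mem _
  -- minimal generators
  have hminsub : minGens S ⊆ Set.range s := by
    rintro y ⟨hyS, hy0, hns⟩
    obtain ⟨g, hg, w, hw, rfl⟩ := aux_dec hyS hy0
    rcases Nat.eq_zero_or_pos w with rfl | hw0
    · simpa using hg
    · obtain ⟨i, rfl⟩ := hg
      exact absurd ⟨s i, hsS i, w, hw, (hspos i).ne', hw0.ne', rfl⟩ hns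
  have hgen : ∀ j, s j ∉ AddSubmonoid.closure (s '' Set.Iio j) → s j ∈ minGens S := by
    intro j hj
    refine ⟨hsS j, (hspos j).ne', ?_⟩
    rintro ⟨y, hy, z, hz, hy0, hz0, hyz⟩
    apply hj
    have hylt : y < s j := by omega
    have hzlt : z < s j := by omega
    rw [hyz]
    exact add_mem (hsmall y hy j hylt) (hsmall z hz j hzlt)
  have hnotgen : ∀ j, s j ∈ AddSubmonoid.closure (s '' Set.Iio j) → s j ∉ minGens S := by
    intro j hj hmin
    obtain ⟨g, hg, w, hw, hdec⟩ := aux_dec hj (hspos j).ne'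
    obtain ⟨i, hi, rfl⟩ := hg
    rcases Nat.eq_zero_or_pos w with rfl | hw0
    · have h1 : s i < s j := hsmono hi
      omega
    · exact hmin.2.2 ⟨s i, hsS i, w, hTS j hw, (hspos i).ne', hw0.ne', hdec⟩
  have hex : ∃ j, s j ∈ AddSubmonoid.closure (s '' Set.Iio j) := by
    by_contra h
    push_neg at h
    have heq : minGens S = Set.range s := by
      apply subset_antisymm hminsub
      rintro - ⟨j, rfl⟩
      exact hgen j (h j)
    have hinf : (Set.range s).Infinite := Set.infinite_range_of_injective hsmono.injective
    rw [edim, heq, hinf.ncard] at hm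
    omega
  have hMspec : s (Nat.find hex) ∈ AddSubmonoid.closure (s '' Set.Iio (Nat.find hex)) :=
    Nat.find_spec hex
  have hMge : ∀ j, Nat.find hex ≤ j → s j ∈ AddSubmonoid.closure (s '' Set.Iio j) := by
    intro j hj
    induction j, hj using Nat.le_induction with
    | base => exact hMspec
    | succ j hj ih => exact hPstep j ih
  have hminGens : minGens S = s '' Set.Iio (Nat.find hex) := by
    apply subset_antisymm
    · intro y hy
      obtain ⟨j, rfl⟩ := hminsub hy
      by_cases hjM : j < Nat.find hex
      · exact ⟨j, hjM, rfl⟩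
      · exact absurd hy (hnotgen j (hMge j (by omega)))
    · rintro - ⟨j, hj, rfl⟩
      exact hgen j (Nat.find_min hex hj)
  have hmM : m = Nat.find hex := by
    rw [edim, hminGens, Set.ncard_image_of_injective _ hsmono.injective,
      ← Finset.coe_Iio, Set.ncard_coe_finset, Nat.card_Iio] at hm
    omega
  have hsmT : s m ∈ AddSubmonoid.closure (s '' Set.Iio m) := by
    rw [hmM]; exact hMspec
  have hallT : ∀ j, s j ∈ AddSubmonoid.closure (s '' Set.Iio m) := by
    intro j
    induction j using Nat.strong_induction_on with
    | _ j ih =>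
      by_cases hj : j < m
      · exact hsT j m hj
      · have h1 : s j ∈ AddSubmonoid.closure (s '' Set.Iio j) := hMge j (by omega)
        exact AddSubmonoid.closure_le.mpr (by rintro - ⟨i, hi, rfl⟩; exact ih i hi) h1
  have hST : ∀ y, y ∈ S → y ∈ AddSubmonoid.closure (s '' Set.Iio m) := fun y hy =>
    AddSubmonoid.closure_le.mpr (by rintro - ⟨j, rfl⟩; exact hallT j) hy
  -- membership helpers for sums
  have hmemS : ∀ g : ℕ → ℕ, (∑ t ∈ Finset.Ico 1 m, g t * s t) ∈ S := fun g =>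
    AddSubmonoid.sum_mem _ fun t _ => by simpa using S.nsmul_mem (hsS t) (g t)
  have hmulS : ∀ k j : ℕ, k * s j ∈ S := fun k j => by
    simpa using S.nsmul_mem (hsS j) k
  have hcnt_le : ∀ g : ℕ → ℕ, (∑ t ∈ Finset.Ico 1 m, g t * 1)
      ≤ ∑ t ∈ Finset.Ico 1 m, g t * s t :=
    fun g => Finset.sum_le_sum fun t _ => Nat.mul_le_mul_left (g t) (hspos t)
  have hdeg_le : ∀ g : ℕ → ℕ, (∑ t ∈ Finset.Ico 1 m, g t * t)
      ≤ (∑ t ∈ Finset.Ico 1 m, g t * 1) * m := by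
    intro g
    rw [Finset.sum_mul]
    refine Finset.sum_le_sum fun t ht => ?_
    have h1 : t ≤ m := (Finset.mem_Ico.mp ht).2.le
    calc g t * t ≤ g t * m := Nat.mul_le_mul_left _ h1
      _ = g t * 1 * m := by ring
  -- main induction
  have main : ∀ N : ℕ, ∀ β : ℕ → ℕ,
      ((x - ∑ t ∈ Finset.Ico 1 m, β t * 1) * (m * x + 1)
        + ∑ t ∈ Finset.Ico 1 m, β t * t) ≤ N →
      x = (∑ t ∈ Finset.Ico 1 m, β t * s t) →
      ∃ α : Fin (m - 1) → ℕ, IsResidual a α ∧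
        x = ∑ i : Fin (m - 1), α i * s ((i : ℕ) + 1) := by
    intro N
    induction N using Nat.strong_induction_on with
    | _ N ih =>
    intro β hN hval
    by_cases hres : IsResidual a (fun i : Fin (m - 1) => β ((i : ℕ) + 1))
    · refine ⟨_, hres, ?_⟩
      show x = ∑ i : Fin (m - 1), β ((i : ℕ) + 1) * s ((i : ℕ) + 1)
      rw [hval, Ico_sum_eq_fin_sum (fun t => β t * s t) m]
    · -- common rewriting step
      have key : ∀ u v : ℕ, 1 ≤ v → v ≤ u → u < m →
          (∀ t, (if t = u then a else 0) + (if t = v then 1 else 0) ≤ β t) →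
          ∃ α : Fin (m - 1) → ℕ, IsResidual a α ∧
            x = ∑ i : Fin (m - 1), α i * s ((i : ℕ) + 1) := by
        intro u v hv1 hvu hum hge
        obtain ⟨δ, hβδ⟩ : ∃ δ : ℕ → ℕ, ∀ t,
            β t = δ t + (if t = u then a else 0) + (if t = v then 1 else 0) := by
          refine ⟨fun t => β t - (if t = u then a else 0) - (if t = v then 1 else 0), fun t => ?_⟩
          have h := hge t
          show β t = β t - (if t = u then a else 0) - (if t = v then 1 else 0)
            + (if t = u then a else 0) + (if t = v then 1 else 0)
          split_ifs at h ⊢ <;> omega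
        have humem : u ∈ Finset.Ico 1 m := Finset.mem_Ico.mpr ⟨by omega, hum⟩
        have hvmem : v ∈ Finset.Ico 1 m := Finset.mem_Ico.mpr ⟨hv1, by omega⟩
        have hdecsum : ∀ f : ℕ → ℕ, (∑ t ∈ Finset.Ico 1 m, β t * f t)
            = (∑ t ∈ Finset.Ico 1 m, δ t * f t) + a * f u + 1 * f v := by
          intro f
          rw [← sum_decomp2 (Finset.Ico 1 m) δ u a v 1 f humem hvmem]
          exact Finset.sum_congr rfl fun t _ => by rw [hβδ t]
        have hxval : x = (∑ t ∈ Finset.Ico 1 m, δ t * s t) + (s (u + 1) + a * s (v - 1)) := by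
          rw [hval, hdecsum s, ← htrade u v hv1]; ring
        by_cases hveq : v = 1
        · subst hveq
          exfalso
          obtain ⟨a', ha'⟩ : ∃ a', a = a' + 1 := ⟨a - 1, by omega⟩
          refine hcontr ((∑ t ∈ Finset.Ico 1 m, δ t * s t) + s (u + 1) + a' * s 0)
            (add_mem (add_mem (hmemS δ) (hsS (u + 1))) (hmulS a' 0)) ?_
          rw [hxval, ha']
          simp only [Nat.sub_self]
          ring
        · have hv2 : 2 ≤ v := by omega
          have hv1mem : v - 1 ∈ Finset.Ico 1 m := Finset.mem_Ico.mpr ⟨by omega, by omega⟩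
          by_cases humm : u + 1 < m
          · -- simple trade
            have hu1mem : u + 1 ∈ Finset.Ico 1 m := Finset.mem_Ico.mpr ⟨by omega, humm⟩
            have hval' : x = ∑ t ∈ Finset.Ico 1 m,
                (δ t + (if t = u + 1 then 1 else 0) + (if t = v - 1 then a else 0)) * s t := by
              rw [sum_decomp2 (Finset.Ico 1 m) δ (u + 1) 1 (v - 1) a s hu1mem hv1mem, hxval]
              ring
            refine ih _ ?_ (fun t => δ t + (if t = u + 1 then 1 else 0)
              + (if t = v - 1 then a else 0)) le_rfl hval'
            have e1 : (∑ t ∈ Finset.Ico 1 m,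
                (δ t + (if t = u + 1 then 1 else 0) + (if t = v - 1 then a else 0)) * 1)
                = ∑ t ∈ Finset.Ico 1 m, β t * 1 := by
              rw [sum_decomp2 (Finset.Ico 1 m) δ (u + 1) 1 (v - 1) a (fun _ => 1) hu1mem hv1mem,
                hdecsum (fun _ => 1)]
              omega
            have e2 : (∑ t ∈ Finset.Ico 1 m,
                (δ t + (if t = u + 1 then 1 else 0) + (if t = v - 1 then a else 0)) * t)
                < ∑ t ∈ Finset.Ico 1 m, β t * t := by
              rw [sum_decomp2 (Finset.Ico 1 m) δ (u + 1) 1 (v - 1) a (fun t => t) hu1mem hv1mem,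
                hdecsum (fun t => t)]
              simp only [one_mul]
              obtain ⟨w, rfl⟩ : ∃ w, v = w + 1 := ⟨v - 1, by omega⟩
              simp only [Nat.add_sub_cancel]
              obtain ⟨e, rfl⟩ : ∃ e, u = w + 1 + e := ⟨u - (w + 1), by omega⟩
              have h4 : e ≤ a * e := Nat.le_mul_of_pos_left e (by omega)
              have h5 : a * (w + 1 + e) = a * w + a + a * e := by ring
              rw [h5]
              have h6 : w + 1 + e + 1 + a * w < a * w + a + a * e + (w + 1) := by
                have : e + 1 < a + a * e := by omega
                omega
              omega
            rw [e1]
            exact lt_of_lt_of_le (Nat.add_lt_add_left e2 _) hN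
          · -- substitution of s m
            have hum1 : u + 1 = m := by omega
            obtain ⟨γ, hγ⟩ := aux_rep s m hsmT
            by_cases hγ0 : γ 0 = 0
            · have hγ' : s m = ∑ t ∈ Finset.Ico 1 m, γ t * s t := by
                rw [hγ, Finset.range_eq_Ico,
                  Finset.sum_eq_sum_Ico_succ_bot (by omega : (0 : ℕ) < m), hγ0]
                simp
              have hsum_split : ∀ f : ℕ → ℕ,
                  (∑ t ∈ Finset.Ico 1 m, (δ t + γ t + (if t = v - 1 then a else 0)) * f t)
                  = (∑ t ∈ Finset.Ico 1 m, δ t * f t)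
                    + (∑ t ∈ Finset.Ico 1 m, γ t * f t) + a * f (v - 1) := by
                intro f
                rw [sum_decomp1 (Finset.Ico 1 m) (fun t => δ t + γ t) (v - 1) a f hv1mem]
                congr 1
                rw [← Finset.sum_add_distrib]
                exact Finset.sum_congr rfl fun t _ => by ring
              have hval' : x = ∑ t ∈ Finset.Ico 1 m,
                  (δ t + γ t + (if t = v - 1 then a else 0)) * s t := by
                rw [hsum_split s, ← hγ', hxval, hum1]
                ring
              have hγpos : 2 ≤ ∑ t ∈ Finset.Ico 1 m, γ t * 1 := by
                by_contra hlt
                push_neg at hlt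
                have h1 : s m ≤ (∑ t ∈ Finset.Ico 1 m, γ t * 1) * s (m - 1) := by
                  rw [hγ', Finset.sum_mul]
                  refine Finset.sum_le_sum fun t ht => ?_
                  have h2 : s t ≤ s (m - 1) := hsmono.le_iff_le.mpr
                    (by have := (Finset.mem_Ico.mp ht).2; omega)
                  calc γ t * s t ≤ γ t * s (m - 1) := Nat.mul_le_mul_left _ h2
                    _ = γ t * 1 * s (m - 1) := by ring
                have h3 : (∑ t ∈ Finset.Ico 1 m, γ t * 1) * s (m - 1) ≤ 1 * s (m - 1) :=
                  Nat.mul_le_mul_right _ (by omega)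
                have h4 : s (m - 1) < s m := hsmono (by omega)
                have h5 : s m ≤ s (m - 1) := by
                  calc s m ≤ (∑ t ∈ Finset.Ico 1 m, γ t * 1) * s (m - 1) := h1
                    _ ≤ 1 * s (m - 1) := h3
                    _ = s (m - 1) := one_mul _
                omega
              refine ih _ ?_ (fun t => δ t + γ t + (if t = v - 1 then a else 0)) le_rfl hval'
              -- measure strictly decreases
              have hc' : (∑ t ∈ Finset.Ico 1 m,
                  (δ t + γ t + (if t = v - 1 then a else 0)) * 1)
                  = (∑ t ∈ Finset.Ico 1 m, δ t * 1)
                    + (∑ t ∈ Finset.Ico 1 m, γ t * 1) + a * 1 := hsum_split (fun _ => 1)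
              have hcβ : (∑ t ∈ Finset.Ico 1 m, β t * 1)
                  = (∑ t ∈ Finset.Ico 1 m, δ t * 1) + a * 1 + 1 * 1 := hdecsum (fun _ => 1)
              have hcc' : (∑ t ∈ Finset.Ico 1 m, β t * 1) + 1
                  ≤ ∑ t ∈ Finset.Ico 1 m, (δ t + γ t + (if t = v - 1 then a else 0)) * 1 := by
                omega
              have hc'x : (∑ t ∈ Finset.Ico 1 m,
                  (δ t + γ t + (if t = v - 1 then a else 0)) * 1) ≤ x := by
                calc (∑ t ∈ Finset.Ico 1 m, (δ t + γ t + (if t = v - 1 then a else 0)) * 1)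
                    ≤ ∑ t ∈ Finset.Ico 1 m,
                      (δ t + γ t + (if t = v - 1 then a else 0)) * s t :=
                      hcnt_le (fun t => δ t + γ t + (if t = v - 1 then a else 0))
                  _ = x := hval'.symm
              have hD' : (∑ t ∈ Finset.Ico 1 m,
                  (δ t + γ t + (if t = v - 1 then a else 0)) * t) ≤ m * x := by
                calc (∑ t ∈ Finset.Ico 1 m, (δ t + γ t + (if t = v - 1 then a else 0)) * t)
                    ≤ (∑ t ∈ Finset.Ico 1 m,
                      (δ t + γ t + (if t = v - 1 then a else 0)) * 1) * m :=
                      hdeg_le (fun t => δ t + γ t + (if t = v - 1 then a else 0))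
                  _ ≤ x * m := Nat.mul_le_mul_right _ hc'x
                  _ = m * x := Nat.mul_comm _ _
              exact lt_of_lt_of_le (meas_lt hcc' hc'x hD') hN
            · exfalso
              obtain ⟨g', hg'⟩ : ∃ g', γ 0 = g' + 1 := ⟨γ 0 - 1, by omega⟩
              have hsm0 : s m = s 0 + (g' * s 0 + ∑ t ∈ Finset.Ico 1 m, γ t * s t) := by
                rw [hγ, Finset.range_eq_Ico,
                  Finset.sum_eq_sum_Ico_succ_bot (by omega : (0 : ℕ) < m), hg']
                simp only [zero_add]
                ring
              refine hcontr (g' * s 0 + (∑ t ∈ Finset.Ico 1 m, γ t * s t)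
                + ((∑ t ∈ Finset.Ico 1 m, δ t * s t) + a * s (v - 1)))
                (add_mem (add_mem (hmulS g' 0) (hmemS γ))
                  (add_mem (hmemS δ) (hmulS a (v - 1)))) ?_
              rw [hxval, hum1, hsm0]
              ring
      -- dispatch the two non-residual cases
      simp only [IsResidual, not_and_or] at hres
      rcases hres with h1 | h2
      · push_neg at h1
        obtain ⟨i, hi⟩ := h1
        have hi' : a < β ((i : ℕ) + 1) := hi
        refine key ((i : ℕ) + 1) ((i : ℕ) + 1) (by omega) le_rfl
          (by have := i.isLt; omega) ?_
        intro t
        by_cases ht : t = (i : ℕ) + 1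
        · subst ht
          rw [if_pos rfl, if_pos rfl]
          omega
        · rw [if_neg ht, if_neg ht]
          omega
      · push_neg at h2
        obtain ⟨i, j, hia, hi1, hji, hj0⟩ := h2
        have hia' : β ((i : ℕ) + 1) = a := hia
        have hj0' : β ((j : ℕ) + 1) ≠ 0 := hj0
        have hji' : (j : ℕ) < (i : ℕ) := hji
        refine key ((i : ℕ) + 1) ((j : ℕ) + 1) (by omega) (by omega)
          (by have := i.isLt; omega) ?_
        intro t
        by_cases htu : t = (i : ℕ) + 1
        · subst htu
          have hne : (i : ℕ) + 1 ≠ (j : ℕ) + 1 := by omega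
          rw [if_pos rfl, if_neg hne]
          omega
        · by_cases htv : t = (j : ℕ) + 1
          · subst htv
            rw [if_neg htu, if_pos rfl]
            omega
          · rw [if_neg htu, if_neg htv]
            omega
  -- initial representation
  obtain ⟨β₀, hβ₀⟩ := aux_rep s m (hST x hx.1)
  have hsplit0 : x = β₀ 0 * s 0 + ∑ t ∈ Finset.Ico 1 m, β₀ t * s t := by
    rw [hβ₀, Finset.range_eq_Ico,
      Finset.sum_eq_sum_Ico_succ_bot (by omega : (0 : ℕ) < m)]
  have hβ00 : β₀ 0 = 0 := by
    by_contra h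
    obtain ⟨g', hg'⟩ : ∃ g', β₀ 0 = g' + 1 := ⟨β₀ 0 - 1, by omega⟩
    refine hcontr (g' * s 0 + ∑ t ∈ Finset.Ico 1 m, β₀ t * s t)
      (add_mem (hmulS g' 0) (hmemS β₀)) ?_
    rw [hsplit0, hg']
    ring
  have hx1 : x = ∑ t ∈ Finset.Ico 1 m, β₀ t * s t := by
    rw [hsplit0, hβ00]
    simp
  exact main _ β₀ le_rfl hx1
end

section
/- Let t be a positive integer. Then for every residual t-tuple (α_1, …, α_t), one has s_{t+1} > ∑_{j=1}^{t} α_j·s_j. -/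
theorem sum_range_mul_pow_le_pow {a m t : ℕ} (f : ℕ → ℕ) (hmt : m < t)
    (hlow : ∀ j < m, f j = 0) (hm : f m ≤ a) (hhigh : ∀ j, m < j → j < t → f j < a) :
    ∑ j ∈ Finset.range t, f j * a ^ j ≤ a ^ t := by
  induction t, hmt using Nat.le_induction with
  | base =>
    rw [Finset.sum_range_succ, pow_succ', Finset.sum_eq_zero fun j hj => by
      rw [hlow j (Finset.mem_range.mp hj), zero_mul], zero_add]
    exact Nat.mul_le_mul_right _ hm
  | succ t hmt ih =>
    have hlower := ih fun j hmj hjt => hhigh j hmj (by omega)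
    have htop : (f t + 1) * a ^ t ≤ a * a ^ t := Nat.mul_le_mul_right _ (hhigh t hmt (by omega))
    rw [Finset.sum_range_succ, pow_succ']
    linarith

theorem sum_mul_pow_lt_pow_of_sum_le_one {a t : ℕ} (ha : 1 < a) (α : Fin t → ℕ)
    (hα : ∑ i, α i ≤ 1) : ∑ i, α i * a ^ (i : ℕ) < a ^ t := by
  have hpow (i : Fin t) : a ^ (i : ℕ) ≤ a ^ t - 1 :=
    Nat.le_sub_one_of_lt (Nat.pow_lt_pow_right ha i.isLt)
  calc ∑ i, α i * a ^ (i : ℕ) ≤ ∑ i, α i * (a ^ t - 1) :=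
        Finset.sum_le_sum fun i _ => Nat.mul_le_mul_left _ (hpow i)
    _ = (∑ i, α i) * (a ^ t - 1) := (Finset.sum_mul ..).symm
    _ ≤ 1 * (a ^ t - 1) := Nat.mul_le_mul_right _ hα
    _ < a ^ t := by
      rw [one_mul]
      exact Nat.sub_one_lt (pow_pos (by omega) t).ne'

namespace IsResidual

variable {a t : ℕ} {α : Fin t → ℕ}

theorem exists_pivot (hα : IsResidual a α) (ha : 0 < a) (ht : 0 < t) :
    ∃ m : Fin t, (∀ j < m, α j = 0) ∧ ∀ j, m < j → α j < a := by
  by_cases h : ∃ i : Fin t, 1 ≤ (i : ℕ) ∧ α i = a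
  · obtain ⟨i, hi, hia⟩ := h
    refine ⟨i, fun j hj => hα.2 i j hia hi hj, fun j hij => (hα.1 j).lt_of_ne fun hja => ?_⟩
    have := hα.2 j i hja (by rw [Fin.lt_def] at hij; omega) hij
    omega
  · push Not at h
    exact ⟨⟨0, ht⟩, fun j hj => absurd hj (Nat.not_lt_zero _),
      fun j hj => (hα.1 j).lt_of_ne (h j hj)⟩

theorem sum_mul_pow_le (hα : IsResidual a α) (ha : 0 < a) :
    ∑ i, α i * a ^ (i : ℕ) ≤ a ^ t := by
  rcases Nat.eq_zero_or_pos t with rfl | ht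
  · simp
  obtain ⟨m, hlow, hhigh⟩ := hα.exists_pivot ha ht
  let f : ℕ → ℕ := fun j => if h : j < t then α ⟨j, h⟩ else 0
  have hf (i : Fin t) : f i = α i := dif_pos i.isLt
  calc ∑ i, α i * a ^ (i : ℕ) = ∑ j ∈ Finset.range t, f j * a ^ j := by
        rw [← Fin.sum_univ_eq_sum_range (fun j => f j * a ^ j)]
        simp only [hf]
    _ ≤ a ^ t := by
      refine sum_range_mul_pow_le_pow f m.isLt (fun j hj => ?_) (hf m ▸ hα.1 m)
        (fun j hmj hjt => ?_)
      · simpa only [f, dif_pos (hj.trans m.isLt)] using hlow ⟨j, _⟩ hj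
      · simpa only [f, dif_pos hjt] using hhigh ⟨j, hjt⟩ hmj

end IsResidual

theorem stmt_15_general (a c d n : ℕ) (ha : 2 ≤ a) (hd : 0 < d) (hdca : d < c * a)
    (s : ℕ → ℕ) (hs : ∀ j, s j = c * a ^ (n + j) - d)
    (t : ℕ) (α : Fin t → ℕ) (hα : IsResidual a α) :
    ∑ i : Fin t, α i * s ((i : ℕ) + 1) < s (t + 1) := by
  set P := c * a ^ (n + 1)
  have hdP : d < P := hdca.trans_le (Nat.mul_le_mul_left c (Nat.le_self_pow (by omega) a))
  have hs_add (j : ℕ) : s (j + 1) + d = P * a ^ j := by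
    have hPj : P ≤ P * a ^ j := Nat.le_mul_of_pos_right P (pow_pos (by omega) j)
    rw [hs, show c * a ^ (n + (j + 1)) = P * a ^ j by ring]
    omega
  set K := ∑ i : Fin t, α i * a ^ (i : ℕ)
  have hsum : ∑ i : Fin t, α i * s ((i : ℕ) + 1) + d * ∑ i, α i = P * K := by
    rw [Finset.mul_sum, Finset.mul_sum, ← Finset.sum_add_distrib]
    refine Finset.sum_congr rfl fun i _ => ?_
    rw [mul_comm d, ← mul_add, hs_add]
    ring
  have hlast := hs_add t
  have hK : P * K ≤ P * a ^ t := Nat.mul_le_mul_left P (hα.sum_mul_pow_le (by omega))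
  rcases le_or_gt (∑ i, α i) 1 with hS | hS
  · have hK_lt : P * (K + 1) ≤ P * a ^ t :=
      Nat.mul_le_mul_left P (sum_mul_pow_lt_pow_of_sum_le_one ha α hS)
    linarith [Nat.zero_le (d * ∑ i, α i)]
  · have hdS : d * 2 ≤ d * ∑ i, α i := Nat.mul_le_mul_left d hS
    linarith

/-- for every positive integer `t` and every residual `t`-tuple
`(α_1, …, α_t)`, one has `s_{t+1} > ∑_{j=1}^{t} α_j·s_j`. -/
theorem stmt_15 (a c d n : ℕ) (ha : 2 ≤ a) (hc : 0 < c) (hd : 0 < d)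
    (hdca : d < c * a) (hda : Nat.Coprime d a) (hdc : Nat.Coprime d c) (hn : 0 < n)
    (s : ℕ → ℕ) (hs : ∀ j, s j = c * a ^ (n + j) - d)
    (t : ℕ) (ht : 0 < t) (α : Fin t → ℕ) (hα : IsResidual a α) :
    ∑ i : Fin t, α i * s ((i : ℕ) + 1) < s (t + 1) :=
  stmt_15_general a c d n ha hd hdca s hs t α hα
end

section
/- Let r ≥ 1 and let (α_1, …, α_r) and (β_1, …, β_r) be residual r-tuples. Then (α_1, …, α_r) <_c (β_1, …, β_r) in the co-lexicographic order if and only if ∑_{j=1}^{r} α_j·s_j < ∑_{j=1}^{r} β_j·s_j. -/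
/-- The strict co-lexicographic order: `α <_c β` iff there is an index `t` with
`α_t < β_t` and `α_j = β_j` for all `j > t`. -/
def ColexLt {r : ℕ} (α β : Fin r → ℕ) : Prop :=
  ∃ t : Fin r, α t < β t ∧ ∀ j : Fin r, t < j → α j = β j

theorem IsResidual.init {a r : ℕ} {α : Fin (r + 1) → ℕ} (hα : IsResidual a α) :
    IsResidual a (Fin.init α) :=
  ⟨fun _ => hα.1 _, fun _ _ hi h1 hj => hα.2 _ _ hi h1 (Fin.castSucc_lt_castSucc_iff.2 hj)⟩

theorem IsResidual.init_eq_zero_of_last_eq {a r : ℕ} {α : Fin (r + 1) → ℕ}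
    (hα : IsResidual a α) (hlast : α (Fin.last r) = a) (i : Fin r) : Fin.init α i = 0 :=
  hα.2 _ _ hlast (by simp only [Fin.val_last]; exact i.pos) (Fin.castSucc_lt_last i)

theorem colexLt_iff_last {r : ℕ} {α β : Fin (r + 1) → ℕ} :
    ColexLt α β ↔ α (Fin.last r) < β (Fin.last r) ∨
      α (Fin.last r) = β (Fin.last r) ∧ ColexLt (Fin.init α) (Fin.init β) := by
  constructor
  · rintro ⟨t, hlt, hall⟩
    induction t using Fin.lastCases with
    | last => exact .inl hlt
    | cast t =>
      exact .inr ⟨hall _ (Fin.castSucc_lt_last t),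
        t, hlt, fun j hj => hall _ (Fin.castSucc_lt_castSucc_iff.2 hj)⟩
  · rintro (hlt | ⟨heq, t, hlt, hall⟩)
    · exact ⟨Fin.last r, hlt, fun j hj => absurd hj (Fin.le_last j).not_gt⟩
    · refine ⟨t.castSucc, hlt, fun j hj => ?_⟩
      induction j using Fin.lastCases with
      | last => exact heq
      | cast j => exact hall j (Fin.castSucc_lt_castSucc_iff.1 hj)

theorem colexLt_or_colexLt_of_ne {r : ℕ} {α β : Fin r → ℕ} (hne : α ≠ β) :
    ColexLt α β ∨ ColexLt β α := by
  induction r with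
  | zero => exact absurd (funext fun i => i.elim0) hne
  | succ r ih =>
    simp only [colexLt_iff_last]
    rcases lt_trichotomy (α (Fin.last r)) (β (Fin.last r)) with hlt | heq | hgt
    · exact .inl (.inl hlt)
    · have hinit : Fin.init α ≠ Fin.init β := fun h =>
        hne (by rw [← Fin.snoc_init_self α, ← Fin.snoc_init_self β, h, heq])
      exact (ih hinit).imp (fun h => .inr ⟨heq, h⟩) (fun h => .inr ⟨heq.symm, h⟩)
    · exact .inr (.inl hgt)

section GrowingWeights

variable {a : ℕ} {u : ℕ → ℕ} (hu0 : 0 < u 0) (hu : ∀ j, a * u j < u (j + 1))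
include hu0 hu

theorem IsResidual.sum_mul_lt {r : ℕ} {α : Fin r → ℕ} (hα : IsResidual a α) :
    ∑ i, α i * u i < u r := by
  induction r with
  | zero => simpa using hu0
  | succ r ih =>
    rw [Fin.sum_univ_castSucc, Fin.val_last]
    by_cases hlast : α (Fin.last r) = a
    · have hinit : ∑ i : Fin r, α i.castSucc * u i.castSucc = 0 :=
        Finset.sum_eq_zero fun i _ => by
          rw [show α i.castSucc = 0 from hα.init_eq_zero_of_last_eq hlast i, zero_mul]
      rw [hinit, zero_add, hlast]
      exact hu r
    · have hlt : α (Fin.last r) + 1 ≤ a := by have := hα.1 (Fin.last r); omega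
      calc ∑ i : Fin r, α i.castSucc * u i.castSucc + α (Fin.last r) * u r
          < u r + α (Fin.last r) * u r := Nat.add_lt_add_right (ih hα.init) _
        _ = (α (Fin.last r) + 1) * u r := by ring
        _ ≤ a * u r := Nat.mul_le_mul_right _ hlt
        _ < u (r + 1) := hu r

theorem ColexLt.sum_mul_lt {r : ℕ} {α β : Fin r → ℕ} (hα : IsResidual a α)
    (h : ColexLt α β) : ∑ i, α i * u i < ∑ i, β i * u i := by
  induction r with
  | zero => obtain ⟨t, -⟩ := h; exact t.elim0
  | succ r ih =>
    rw [Fin.sum_univ_castSucc, Fin.sum_univ_castSucc, Fin.val_last]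
    rcases colexLt_iff_last.1 h with hlt | ⟨heq, hinit⟩
    · calc ∑ i : Fin r, α i.castSucc * u i.castSucc + α (Fin.last r) * u r
          < u r + α (Fin.last r) * u r := Nat.add_lt_add_right (hα.init.sum_mul_lt hu0 hu) _
        _ = (α (Fin.last r) + 1) * u r := by ring
        _ ≤ β (Fin.last r) * u r := Nat.mul_le_mul_right _ hlt
        _ ≤ _ := Nat.le_add_left _ _
    · rw [heq]
      exact Nat.add_lt_add_right (ih hα.init hinit) _

theorem colexLt_iff_sum_mul_lt {r : ℕ} {α β : Fin r → ℕ} (hα : IsResidual a α)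
    (hβ : IsResidual a β) : ColexLt α β ↔ ∑ i, α i * u i < ∑ i, β i * u i := by
  refine ⟨ColexLt.sum_mul_lt hu0 hu hα, fun hsum => ?_⟩
  have hne : α ≠ β := by rintro rfl; exact lt_irrefl _ hsum
  exact (colexLt_or_colexLt_of_ne hne).resolve_right
    fun h => (h.sum_mul_lt hu0 hu hβ).not_gt hsum

end GrowingWeights

theorem stmt_16_general (a c d n : ℕ) (ha : 2 ≤ a) (hd : 0 < d)
    (hdca : d < c * a)
    (s : ℕ → ℕ) (hs : ∀ j, s j = c * a ^ (n + j) - d)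
    (r : ℕ) (α β : Fin r → ℕ)
    (hα : IsResidual a α) (hβ : IsResidual a β) :
    ColexLt α β ↔
      ∑ i : Fin r, α i * s ((i : ℕ) + 1) < ∑ i : Fin r, β i * s ((i : ℕ) + 1) := by
  have hd_lt : ∀ j, d < c * a ^ (n + (j + 1)) := fun j =>
    hdca.trans_le (Nat.mul_le_mul_left c (Nat.le_self_pow (by omega) a))
  have hpos : 0 < s (0 + 1) := by have := hd_lt 0; rw [hs]; omega
  have hstep : ∀ j, a * s (j + 1) < s (j + 1 + 1) := by
    intro j
    have hpow : c * a ^ (n + (j + 1 + 1)) = a * (c * a ^ (n + (j + 1))) := by ring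
    have h₁ : a * d ≤ a * (c * a ^ (n + (j + 1))) := Nat.mul_le_mul_left a (hd_lt j).le
    have h₂ : d < a * d := lt_mul_left hd (by omega)
    rw [hs, hs, hpow, Nat.mul_sub]
    omega
  exact colexLt_iff_sum_mul_lt (u := fun j => s (j + 1)) hpos hstep hα hβ

/-- for residual `r`-tuples `(α_1, …, α_r)` and `(β_1, …, β_r)`,
`(α_1, …, α_r) <_c (β_1, …, β_r)` iff `∑_{j=1}^{r} α_j·s_j < ∑_{j=1}^{r} β_j·s_j`. -/
theorem stmt_16 (a c d n : ℕ) (ha : 2 ≤ a) (hc : 0 < c) (hd : 0 < d)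
    (hdca : d < c * a) (hda : Nat.Coprime d a) (hdc : Nat.Coprime d c) (hn : 0 < n)
    (s : ℕ → ℕ) (hs : ∀ j, s j = c * a ^ (n + j) - d)
    (r : ℕ) (hr : 0 < r) (α β : Fin r → ℕ)
    (hα : IsResidual a α) (hβ : IsResidual a β) :
    ColexLt α β ↔
      ∑ i : Fin r, α i * s ((i : ℕ) + 1) < ∑ i : Fin r, β i * s ((i : ℕ) + 1) :=
  stmt_16_general a c d n ha hd hdca s hs r α β hα hβ
end

section
/- Let a ≥ 2 be an integer, let r ≥ 1, and let (α_1, …, α_r) be a residual r-tuple. Then the number of residual r-tuples that are less than or equal to (α_1, …, α_r) with respect to the co-lexicographic order is 1 + ∑_{j=1}^{r} α_j·R_j. -/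
/-- The co-lexicographic order: `α ≤_c β` iff `α = β` or `α <_c β`. -/
def ColexLe {r : ℕ} (α β : Fin r → ℕ) : Prop := α = β ∨ ColexLt α β

/-- geometric sum `1 + a + ⋯ + a^(j-1)` -/
def Sgeo (a j : ℕ) : ℕ := ∑ k ∈ Finset.range j, a ^ k

lemma Sgeo_range_succ (a j : ℕ) : Sgeo a (j+1) = Sgeo a j + a ^ j :=
  Finset.sum_range_succ _ _

lemma Sgeo_succ_eq (a j : ℕ) : a * Sgeo a j + 1 = Sgeo a (j+1) := by
  induction j with
  | zero => simp [Sgeo]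
  | succ j ih =>
    calc a * Sgeo a (j+1) + 1 = a * (Sgeo a j + a ^ j) + 1 := by rw [Sgeo_range_succ]
      _ = (a * Sgeo a j + 1) + a * a ^ j := by ring
      _ = Sgeo a (j+1) + a ^ (j+1) := by rw [ih]; ring
      _ = Sgeo a (j+1+1) := (Sgeo_range_succ a (j+1)).symm

lemma Sgeo_pos (a j : ℕ) : 1 ≤ Sgeo a (j+1) := by
  have := Sgeo_succ_eq a j; omega

/-- the value of a tuple -/
def fsum (a : ℕ) {r : ℕ} (β : Fin r → ℕ) : ℕ := ∑ i : Fin r, β i * Sgeo a ((i : ℕ) + 1)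

lemma step_bound (a : ℕ) {c S S' : ℕ} (hc : c < a) (hP : a * S + 1 = S') (P : ℕ)
    (hPle : P ≤ a * S) : c * S' + P ≤ a * S' := by
  have h1 : (c + 1) * S' ≤ a * S' := Nat.mul_le_mul_right _ hc
  have h2 : (c + 1) * S' = c * S' + S' := by ring
  omega

lemma bound_lemma (a : ℕ) (ha : 2 ≤ a) {r : ℕ} (β : Fin r → ℕ) (hβ : IsResidual a β)
    (t : ℕ) (ht : t ≤ r) :
    ∑ j ∈ Finset.univ.filter (fun j : Fin r => (j : ℕ) < t), β j * Sgeo a ((j : ℕ) + 1)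
      ≤ a * Sgeo a t := by
  induction t with
  | zero => simp
  | succ t ih =>
    have htr : t < r := ht
    have htt : t ≤ r := le_of_lt htr
    set tt : Fin r := ⟨t, htr⟩ with htt'
    have hvt : (tt : ℕ) = t := rfl
    have hsplit : Finset.univ.filter (fun j : Fin r => (j : ℕ) < t + 1)
        = insert tt (Finset.univ.filter (fun j : Fin r => (j : ℕ) < t)) := by
      ext j
      simp only [Finset.mem_filter, Finset.mem_insert, Finset.mem_univ, true_and, Fin.ext_iff,
        hvt]
      omega
    have hnot : tt ∉ Finset.univ.filter (fun j : Fin r => (j : ℕ) < t) := by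
      simp [hvt]
    rw [hsplit, Finset.sum_insert hnot]
    simp only [hvt]
    have hS := Sgeo_succ_eq a t
    by_cases hA : β tt = a
    · by_cases h0 : t = 0
      · subst h0
        have he : Finset.univ.filter (fun j : Fin r => (j : ℕ) < 0) = ∅ := by
          ext j; simp
        rw [he]
        simp only [Finset.sum_empty]
        rw [hA]
        omega
      · have hz : ∀ j ∈ Finset.univ.filter (fun j : Fin r => (j : ℕ) < t),
            β j * Sgeo a ((j : ℕ) + 1) = 0 := by
          intro j hj
          simp only [Finset.mem_filter, Finset.mem_univ, true_and] at hj
          have : β j = 0 := hβ.2 tt j hA (by omega) (by rw [Fin.lt_def, hvt]; omega)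
          simp [this]
        rw [Finset.sum_eq_zero hz, hA]
        omega
    · have hlt : β tt < a := lt_of_le_of_ne (hβ.1 tt) hA
      exact step_bound a hlt hS _ (ih htt)

lemma bound_univ (a : ℕ) (ha : 2 ≤ a) {r : ℕ} (β : Fin r → ℕ) (hβ : IsResidual a β) :
    fsum a β ≤ a * Sgeo a r := by
  have h := bound_lemma a ha β hβ r le_rfl
  have he : Finset.univ.filter (fun j : Fin r => (j : ℕ) < r) = Finset.univ := by
    ext j; simp [j.isLt]
  rw [he] at h
  exact h

lemma sum_split (r : ℕ) (t : Fin r) (g : Fin r → ℕ) :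
    ∑ j : Fin r, g j =
      (∑ j ∈ Finset.univ.filter (fun j : Fin r => (j : ℕ) < (t : ℕ)), g j) + g t +
      ∑ j ∈ Finset.univ.filter (fun j : Fin r => (t : ℕ) < (j : ℕ)), g j := by
  have h1 := Finset.sum_filter_add_sum_filter_not Finset.univ
    (fun j : Fin r => (j : ℕ) < (t : ℕ)) g
  have h2 : Finset.univ.filter (fun j : Fin r => ¬ (j : ℕ) < (t : ℕ))
      = insert t (Finset.univ.filter (fun j : Fin r => (t : ℕ) < (j : ℕ))) := by
    ext j
    simp only [Finset.mem_filter, Finset.mem_insert, Finset.mem_univ, true_and, Fin.ext_iff]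
    omega
  have h3 : t ∉ Finset.univ.filter (fun j : Fin r => (t : ℕ) < (j : ℕ)) := by simp
  rw [h2, Finset.sum_insert h3] at h1
  omega

lemma fsum_strict_mono (a : ℕ) (ha : 2 ≤ a) {r : ℕ} (β γ : Fin r → ℕ)
    (hβ : IsResidual a β) (h : ColexLt β γ) : fsum a β < fsum a γ := by
  obtain ⟨t, hlt, htail⟩ := h
  have hsb := sum_split r t (fun j => β j * Sgeo a ((j : ℕ) + 1))
  have hsg := sum_split r t (fun j => γ j * Sgeo a ((j : ℕ) + 1))
  have htl : ∑ j ∈ Finset.univ.filter (fun j : Fin r => (t : ℕ) < (j : ℕ)),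
      β j * Sgeo a ((j : ℕ) + 1)
      = ∑ j ∈ Finset.univ.filter (fun j : Fin r => (t : ℕ) < (j : ℕ)),
      γ j * Sgeo a ((j : ℕ) + 1) := by
    apply Finset.sum_congr rfl
    intro j hj
    simp only [Finset.mem_filter, Finset.mem_univ, true_and] at hj
    rw [htail j (by rwa [Fin.lt_def])]
  have hP : ∑ j ∈ Finset.univ.filter (fun j : Fin r => (j : ℕ) < (t : ℕ)),
      β j * Sgeo a ((j : ℕ) + 1) ≤ a * Sgeo a (t : ℕ) :=
    bound_lemma a ha β hβ (t : ℕ) (le_of_lt t.isLt)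
  have hS := Sgeo_succ_eq a (t : ℕ)
  have hmul : (β t + 1) * Sgeo a ((t : ℕ) + 1) ≤ γ t * Sgeo a ((t : ℕ) + 1) :=
    Nat.mul_le_mul_right _ hlt
  have hexp : (β t + 1) * Sgeo a ((t : ℕ) + 1)
      = β t * Sgeo a ((t : ℕ) + 1) + Sgeo a ((t : ℕ) + 1) := by ring
  unfold fsum
  omega

lemma colex_trichot {r : ℕ} (β γ : Fin r → ℕ) (h : β ≠ γ) : ColexLt β γ ∨ ColexLt γ β := by
  have hne : ∃ i, β i ≠ γ i := Function.ne_iff.mp h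
  set D : Finset (Fin r) := Finset.univ.filter (fun i => β i ≠ γ i) with hD
  have hDne : D.Nonempty := by
    obtain ⟨i, hi⟩ := hne
    exact ⟨i, by simp [hD, hi]⟩
  set t := D.max' hDne with ht
  have htD : t ∈ D := D.max'_mem hDne
  have htne : β t ≠ γ t := by simpa [hD] using htD
  have htail : ∀ j : Fin r, t < j → β j = γ j := by
    intro j hj
    by_contra hne'
    have : j ∈ D := by simp [hD, hne']
    exact absurd (D.le_max' j this) (not_le.mpr hj)
  rcases Nat.lt_or_ge (β t) (γ t) with hlt | hge
  · exact Or.inl ⟨t, hlt, htail⟩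
  · exact Or.inr ⟨t, lt_of_le_of_ne hge (Ne.symm htne), fun j hj => (htail j hj).symm⟩

lemma fsum_snoc (a : ℕ) {r : ℕ} (γ : Fin r → ℕ) (c : ℕ) :
    fsum a (Fin.snoc γ c) = fsum a γ + c * Sgeo a (r + 1) := by
  unfold fsum
  rw [Fin.sum_univ_castSucc]
  simp [Fin.snoc_castSucc, Fin.snoc_last]

lemma fsum_surj (a : ℕ) (ha : 2 ≤ a) :
    ∀ r n : ℕ, n ≤ a * Sgeo a r → ∃ β : Fin r → ℕ, IsResidual a β ∧ fsum a β = n := by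
  intro r
  induction r with
  | zero =>
    intro n hn
    have h0 : Sgeo a 0 = 0 := by simp [Sgeo]
    rw [h0, Nat.mul_zero] at hn
    refine ⟨fun i => 0, ⟨fun i => i.elim0, fun i => i.elim0⟩, ?_⟩
    simp [fsum]
    omega
  | succ r ih =>
    intro n hn
    set s := Sgeo a (r + 1) with hs
    have hspos : 1 ≤ s := Sgeo_pos a r
    have hSr := Sgeo_succ_eq a r
    have hdm : s * (n / s) + n % s = n := Nat.div_add_mod n s
    set c := n / s with hc
    set m := n % s with hm
    have hmlt : m < s := Nat.mod_lt _ (by omega)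
    have hcle : c ≤ a := by
      by_contra hgt
      push_neg at hgt
      have h1 : s * (a + 1) ≤ s * c := Nat.mul_le_mul_left s hgt
      have h2 : s * (a + 1) = s * a + s := by ring
      have h3 : s * a = a * s := by ring
      omega
    by_cases hca : c = a
    · have h3 : s * a = a * s := by ring
      have hna : n = a * s := by rw [hca] at hdm; omega
      refine ⟨fun i => if i = Fin.last r then a else 0, ?_, ?_⟩
      · constructor
        · intro i
          by_cases h : i = Fin.last r <;> simp [h] <;> omega
        · intro i j hi h1 hj
          by_cases h : j = Fin.last r
          · exfalso
            have : i ≤ Fin.last r := Fin.le_last i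
            rw [← h] at this
            exact absurd hj (not_lt.mpr this)
          · simp [h]
      · rw [hna]
        unfold fsum
        rw [Finset.sum_eq_single (Fin.last r)]
        · simp [Fin.val_last, hs]
        · intro i _ hine
          simp [hine]
        · simp
    · have hclt : c < a := lt_of_le_of_ne hcle hca
      have hmle : m ≤ a * Sgeo a r := by omega
      obtain ⟨γ, hγres, hγval⟩ := ih m hmle
      refine ⟨Fin.snoc γ c, ?_, ?_⟩
      · constructor
        · intro i
          by_cases hi : i = Fin.last r
          · rw [hi, Fin.snoc_last]; exact le_of_lt hclt
          · obtain ⟨i', rfl⟩ := Fin.exists_castSucc_eq.mpr hi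
            rw [Fin.snoc_castSucc]
            exact hγres.1 i'
        · intro i j hia h1 hj
          by_cases hi : i = Fin.last r
          · exfalso
            rw [hi, Fin.snoc_last] at hia
            omega
          · obtain ⟨i', rfl⟩ := Fin.exists_castSucc_eq.mpr hi
            rw [Fin.snoc_castSucc] at hia
            have hj' : j ≠ Fin.last r := by
              intro hje
              rw [hje] at hj
              exact absurd (Fin.le_last (Fin.castSucc i')) (not_le.mpr hj)
            obtain ⟨j', rfl⟩ := Fin.exists_castSucc_eq.mpr hj'
            rw [Fin.snoc_castSucc]
            exact hγres.2 i' j' hia (by simpa using h1) (Fin.castSucc_lt_castSucc_iff.mp hj)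
      · rw [fsum_snoc, hγval, show Sgeo a (r+1) = s from rfl, Nat.mul_comm c s]
        omega

lemma Sgeo_eq_div (a : ℕ) (ha : 2 ≤ a) (j : ℕ) : (a ^ j - 1) / (a - 1) = Sgeo a j := by
  have h1 : (a - 1) * Sgeo a j = a ^ j - 1 := by
    induction j with
    | zero => simp [Sgeo]
    | succ j ih =>
      have h2 := Sgeo_range_succ a j
      have h3 : 1 ≤ a ^ j := Nat.one_le_pow _ _ (by omega)
      have h4 : a ^ (j+1) = a * a ^ j := by ring
      have h5 : (a - 1) * (Sgeo a j + a ^ j) = (a-1) * Sgeo a j + (a-1) * a ^ j := by ring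
      have h6 : (a - 1) * a ^ j + a ^ j = a * a ^ j := by
        have h7 : a - 1 + 1 = a := by omega
        calc (a - 1) * a ^ j + a ^ j = (a - 1 + 1) * a ^ j := by ring
          _ = a * a ^ j := by rw [h7]
      rw [h2, h5, ih]
      omega
  rw [← h1, Nat.mul_div_cancel_left _ (by omega : 0 < a - 1)]

/-- for `a ≥ 2`, `r ≥ 1` and a residual `r`-tuple
`(α_1, …, α_r)`, the number of residual `r`-tuples that are `≤_c (α_1, …, α_r)`
is `1 + ∑_{j=1}^{r} α_j·R_j`, where `R_j = (a^j − 1)/(a − 1)`. -/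
theorem stmt_17 (a : ℕ) (ha : 2 ≤ a)
    (R : ℕ → ℕ) (hR : ∀ j, R j = (a ^ j - 1) / (a - 1))
    (r : ℕ) (hr : 0 < r) (α : Fin r → ℕ) (hα : IsResidual a α) :
    {β : Fin r → ℕ | IsResidual a β ∧ ColexLe β α}.ncard =
      1 + ∑ i : Fin r, α i * R ((i : ℕ) + 1) := by
  set T : Set (Fin r → ℕ) := {β | IsResidual a β ∧ ColexLe β α} with hT
  have hinj : Set.InjOn (fsum a) T := by
    intro β hβ γ hγ hfe
    by_contra hne
    rcases colex_trichot β γ hne with h | h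
    · exact absurd hfe (Nat.ne_of_lt (fsum_strict_mono a ha β γ hβ.1 h))
    · exact absurd hfe.symm (Nat.ne_of_lt (fsum_strict_mono a ha γ β hγ.1 h))
  have himg : fsum a '' T = Set.Iic (fsum a α) := by
    ext n
    simp only [Set.mem_Iic, Set.mem_image]
    constructor
    · rintro ⟨β, ⟨hβres, hβle⟩, rfl⟩
      rcases hβle with rfl | hlt
      · exact le_refl _
      · exact le_of_lt (fsum_strict_mono a ha β α hβres hlt)
    · intro hn
      have hn' : n ≤ a * Sgeo a r := le_trans hn (bound_univ a ha α hα)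
      obtain ⟨β, hβres, hβval⟩ := fsum_surj a ha r n hn'
      refine ⟨β, ⟨hβres, ?_⟩, hβval⟩
      by_cases he : β = α
      · exact Or.inl he
      · rcases colex_trichot β α he with h | h
        · exact Or.inr h
        · exfalso
          have := fsum_strict_mono a ha α β hα h
          rw [hβval] at this
          exact absurd hn (not_le.mpr this)
  have hcard : T.ncard = fsum a α + 1 := by
    rw [← Set.ncard_image_of_injOn hinj, himg, ← Finset.coe_Iic, Set.ncard_coe_finset,
      Nat.card_Iic]
  rw [hcard]
  have hRs : ∑ i : Fin r, α i * R ((i : ℕ) + 1) = fsum a α := by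
    apply Finset.sum_congr rfl
    intro i _
    rw [hR, Sgeo_eq_div a ha]
  rw [hRs]
  omega
end
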